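/- arXiv:2511.20953 — 7 statements merged into one kernel-verified Lean document; each statement's English description precedes it below -/
import Mathlib

section
/- A six-tuple (l₁,...,l₆) of positive real numbers is the six-tuple of edge lengths of a truncated hyperideal anti-de Sitter tetrahedron (i.e. there exist four linearly independent vectors v₁,...,v₄ ∈ ℝ⁴ with ⟨vᵢ,vᵢ⟩ = 1 and ⟨vᵢ,vⱼ⟩ = −cosh(l_k) for i ≠ j, under the pair-labeling convention (l₁₂,l₁₃,l₁₄,l₂₃,l₂₄,l₃₄) = (l₁,l₂,l₆,l₃,l₅,l₄)) if and only if det Gram(l₁,...,l₆) > 0. -/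
noncomputable section
open scoped Matrix

/-- The symmetric bilinear form of signature (2,2) on ℝ⁴ (the Lorentzian space E^{2,2}). -/
def bil (x y : Fin 4 → ℝ) : ℝ := x 0 * y 0 + x 1 * y 1 - x 2 * y 2 - x 3 * y 3

/-- The Gram matrix in the edge lengths of a six-tuple (l₁,...,l₆). -/
def gramEdge (l₁ l₂ l₃ l₄ l₅ l₆ : ℝ) : Matrix (Fin 4) (Fin 4) ℝ :=
  !![1, -Real.cosh l₁, -Real.cosh l₂, -Real.cosh l₆;
     -Real.cosh l₁, 1, -Real.cosh l₃, -Real.cosh l₅;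
     -Real.cosh l₂, -Real.cosh l₃, 1, -Real.cosh l₄;
     -Real.cosh l₆, -Real.cosh l₅, -Real.cosh l₄, 1]

/-- quadratic form of a congruence-diagonalized matrix -/
lemma quad_eq (G U : Matrix (Fin 4) (Fin 4) ℝ) (lam : Fin 4 → ℝ)
    (h : G = U * Matrix.diagonal lam * Uᵀ) (x : Fin 4 → ℝ) :
    x ⬝ᵥ (G *ᵥ x) = ∑ k, lam k * ((Uᵀ *ᵥ x) k)^2 := by
  subst h
  simp [Matrix.mul_apply, Matrix.mulVec, dotProduct, Matrix.diagonal,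
    Fin.sum_univ_four, Matrix.transpose_apply]
  ring

lemma exists_of_decomp (G U : Matrix (Fin 4) (Fin 4) ℝ) (lam : Fin 4 → ℝ)
    (hU : IsUnit U.det)
    (hGU : G = U * Matrix.diagonal lam * Uᵀ)
    (τ : Equiv.Perm (Fin 4))
    (h0 : 0 < lam (τ 0)) (h1 : 0 < lam (τ 1)) (h2 : lam (τ 2) < 0) (h3 : lam (τ 3) < 0) :
    ∃ v : Fin 4 → (Fin 4 → ℝ), LinearIndependent ℝ v ∧ ∀ i j, bil (v i) (v j) = G i j := by
  set M : Matrix (Fin 4) (Fin 4) ℝ :=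
    Matrix.of fun i k => Real.sqrt |lam (τ k)| * U i (τ k) with hM
  have hlamne : ∀ m, lam m ≠ 0 := by
    intro m
    obtain ⟨k, rfl⟩ := τ.surjective m
    fin_cases k
    · exact ne_of_gt h0
    · exact ne_of_gt h1
    · exact ne_of_lt h2
    · exact ne_of_lt h3
  have hMdec : M = U * ((Matrix.diagonal fun m => Real.sqrt |lam m|).submatrix id τ) := by
    ext i k
    simp only [hM, Matrix.of_apply, Matrix.mul_apply, Matrix.submatrix_apply, id_eq,
      Matrix.diagonal_apply]
    rw [Finset.sum_eq_single (τ k)]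
    · simp [mul_comm]
    · intro b _ hb; simp [hb]
    · intro h; exact absurd (Finset.mem_univ _) h
  have hMunit : IsUnit M.det := by
    rw [hMdec, Matrix.det_mul, Matrix.det_permute', Matrix.det_diagonal, Fin.prod_univ_four]
    apply IsUnit.mul hU
    apply IsUnit.mul
    · simpa using (Equiv.Perm.sign τ).isUnit.map (Int.castRingHom ℝ)
    · have h : ∀ m : Fin 4, Real.sqrt |lam m| ≠ 0 := fun m => by
        simpa [Real.sqrt_eq_zero', abs_nonneg, not_le] using abs_pos.mpr (hlamne m)
      exact isUnit_iff_ne_zero.mpr (by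
        exact mul_ne_zero (mul_ne_zero (mul_ne_zero (h 0) (h 1)) (h 2)) (h 3))
  refine ⟨fun i => M i, Matrix.linearIndependent_rows_iff_isUnit.mpr
    ((Matrix.isUnit_iff_isUnit_det M).mpr hMunit), ?_⟩
  intro i j
  have hGij : G i j = ∑ m, U i m * (lam m * U j m) := by
    rw [hGU, Matrix.mul_assoc]
    simp [Matrix.mul_apply, Matrix.diagonal_apply, ite_mul, Finset.sum_ite_eq,
      Matrix.transpose_apply]
  have hsum : ∑ m, U i m * (lam m * U j m) = ∑ k, U i (τ k) * (lam (τ k) * U j (τ k)) :=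
    (Equiv.sum_comp τ (fun m => U i m * (lam m * U j m))).symm
  rw [hGij, hsum, Fin.sum_univ_four]
  have e0 : Real.sqrt |lam (τ 0)| ^ 2 = lam (τ 0) := by
    rw [Real.sq_sqrt (abs_nonneg _), abs_of_pos h0]
  have e1 : Real.sqrt |lam (τ 1)| ^ 2 = lam (τ 1) := by
    rw [Real.sq_sqrt (abs_nonneg _), abs_of_pos h1]
  have e2 : Real.sqrt |lam (τ 2)| ^ 2 = -lam (τ 2) := by
    rw [Real.sq_sqrt (abs_nonneg _), abs_of_neg h2]
  have e3 : Real.sqrt |lam (τ 3)| ^ 2 = -lam (τ 3) := by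
    rw [Real.sq_sqrt (abs_nonneg _), abs_of_neg h3]
  simp only [bil, hM, Matrix.of_apply]
  linear_combination (U i (τ 0) * U j (τ 0)) * e0 + (U i (τ 1) * U j (τ 1)) * e1
    - (U i (τ 2) * U j (τ 2)) * e2 - (U i (τ 3) * U j (τ 3)) * e3

/-- A six-tuple of positive reals is the six-tuple of edge lengths of a truncated hyperideal
anti-de Sitter tetrahedron if and only if the determinant of its Gram matrix is positive. -/
theorem stmt1 (l₁ l₂ l₃ l₄ l₅ l₆ : ℝ)
    (h₁ : 0 < l₁) (h₂ : 0 < l₂) (h₃ : 0 < l₃) (h₄ : 0 < l₄) (h₅ : 0 < l₅) (h₆ : 0 < l₆) :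
    (∃ v : Fin 4 → (Fin 4 → ℝ), LinearIndependent ℝ v ∧
      ∀ i j, bil (v i) (v j) = gramEdge l₁ l₂ l₃ l₄ l₅ l₆ i j) ↔
    0 < (gramEdge l₁ l₂ l₃ l₄ l₅ l₆).det := by
  set G := gramEdge l₁ l₂ l₃ l₄ l₅ l₆ with hGdef
  constructor
  · rintro ⟨v, hli, hv⟩
    set M : Matrix (Fin 4) (Fin 4) ℝ := Matrix.of v with hM
    have hdec : G = M * Matrix.diagonal ![1,1,-1,-1] * Mᵀ := by
      ext i j
      rw [← hv i j, Matrix.mul_assoc]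
      simp [Matrix.mul_apply, Matrix.diagonal_apply, ite_mul, Finset.sum_ite_eq,
        Matrix.transpose_apply, Fin.sum_univ_four, bil, hM]
      ring
    have hMdet : M.det ≠ 0 := by
      have h : LinearIndependent ℝ (fun i => M i) := hli
      exact ((Matrix.isUnit_iff_isUnit_det M).mp
        (Matrix.linearIndependent_rows_iff_isUnit.mp h)).ne_zero
    have hdiag : (Matrix.diagonal ![1,1,-1,-1] : Matrix (Fin 4) (Fin 4) ℝ).det = 1 := by
      simp [Matrix.det_diagonal, Fin.prod_univ_four]
    rw [hdec, Matrix.det_mul, Matrix.det_mul, Matrix.det_transpose, hdiag, mul_one]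
    exact mul_self_pos.mpr hMdet
  · intro hdet
    have hG : G.IsHermitian := by
      rw [Matrix.IsHermitian, Matrix.conjTranspose_eq_transpose_of_trivial]
      ext i j
      fin_cases i <;> fin_cases j <;> simp [hGdef, gramEdge]
    set U : Matrix (Fin 4) (Fin 4) ℝ := (hG.eigenvectorUnitary : Matrix (Fin 4) (Fin 4) ℝ)
      with hUdef
    set lam : Fin 4 → ℝ := hG.eigenvalues with hlam
    have hspec : G = U * Matrix.diagonal lam * Uᵀ := by
      have h := hG.spectral_theorem
      rwa [Unitary.conjStarAlgAut_apply, Matrix.star_eq_conjTranspose, Matrix.conjTranspose_eq_transpose_of_trivial,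
        RCLike.ofReal_real_eq_id, Function.id_comp] at h
    have hUdet : IsUnit U.det := by
      refine (Matrix.isUnit_iff_isUnit_det U).mp ⟨Unitary.toUnits hG.eigenvectorUnitary, rfl⟩
    have hdet4 : 0 < lam 0 * lam 1 * lam 2 * lam 3 := by
      have h := hG.det_eq_prod_eigenvalues
      rw [Fin.prod_univ_four] at h
      simp only [RCLike.ofReal_real_eq_id, id_eq] at h
      rw [h] at hdet
      exact hdet
    have hne : ∀ i : Fin 4, lam i ≠ 0 := by
      intro i hzero
      have hp : ∏ m, lam m = 0 := Finset.prod_eq_zero (Finset.mem_univ i) hzero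
      rw [Fin.prod_univ_four] at hp
      linarith
    have hquad := quad_eq G U lam hspec
    -- the two definiteness contradictions
    have hnotpos : ¬ (0 < lam 0 ∧ 0 < lam 1 ∧ 0 < lam 2 ∧ 0 < lam 3) := by
      rintro ⟨p0, p1, p2, p3⟩
      have h := hquad ![1,1,0,0]
      have hl : (![1,1,0,0] : Fin 4 → ℝ) ⬝ᵥ (G *ᵥ ![1,1,0,0]) = 2 - 2 * Real.cosh l₁ := by
        simp [hGdef, gramEdge, Matrix.mulVec, dotProduct, Fin.sum_univ_four]
        ring
      have hr : 0 ≤ ∑ k, lam k * ((Uᵀ *ᵥ ![1,1,0,0]) k)^2 := by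
        refine Finset.sum_nonneg fun k _ => mul_nonneg ?_ (sq_nonneg _)
        fin_cases k
        exacts [p0.le, p1.le, p2.le, p3.le]
      have hc : 1 < Real.cosh l₁ := Real.one_lt_cosh.mpr (ne_of_gt h₁)
      rw [hl] at h
      linarith [h ▸ hr]
    have hnotneg : ¬ (lam 0 < 0 ∧ lam 1 < 0 ∧ lam 2 < 0 ∧ lam 3 < 0) := by
      rintro ⟨p0, p1, p2, p3⟩
      have h := hquad ![1,0,0,0]
      have hl : (![1,0,0,0] : Fin 4 → ℝ) ⬝ᵥ (G *ᵥ ![1,0,0,0]) = 1 := by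
        simp [hGdef, gramEdge, Matrix.mulVec, dotProduct, Fin.sum_univ_four]
      have hr : ∑ k, lam k * ((Uᵀ *ᵥ ![1,0,0,0]) k)^2 ≤ 0 := by
        refine Finset.sum_nonpos fun k _ => mul_nonpos_of_nonpos_of_nonneg ?_ (sq_nonneg _)
        fin_cases k
        exacts [p0.le, p1.le, p2.le, p3.le]
      rw [hl] at h
      linarith [h ▸ hr]
    rcases (hne 0).lt_or_gt with s0 | s0 <;>
      rcases (hne 1).lt_or_gt with s1 | s1 <;>
      rcases (hne 2).lt_or_gt with s2 | s2 <;>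
      rcases (hne 3).lt_or_gt with s3 | s3
    · exact absurd ⟨s0, s1, s2, s3⟩ hnotneg
    · linarith [mul_neg_of_neg_of_pos (mul_neg_of_pos_of_neg
        (mul_pos_of_neg_of_neg s0 s1) s2) s3]
    · linarith [mul_neg_of_pos_of_neg (mul_pos (mul_pos_of_neg_of_neg s0 s1) s2) s3]
    · exact exists_of_decomp G U lam hUdet hspec
        ⟨![2,3,0,1], ![2,3,0,1], by decide, by decide⟩ s2 s3 s0 s1
    · linarith [mul_neg_of_pos_of_neg
        (mul_pos_of_neg_of_neg (mul_neg_of_neg_of_pos s0 s1) s2) s3]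
    · exact exists_of_decomp G U lam hUdet hspec
        ⟨![1,3,0,2], ![2,0,3,1], by decide, by decide⟩ s1 s3 s0 s2
    · exact exists_of_decomp G U lam hUdet hspec
        ⟨![1,2,0,3], ![2,0,1,3], by decide, by decide⟩ s1 s2 s0 s3
    · nlinarith [mul_pos (mul_pos s1 s2) s3]
    · linarith [mul_neg_of_pos_of_neg
        (mul_pos_of_neg_of_neg (mul_neg_of_pos_of_neg s0 s1) s2) s3]
    · exact exists_of_decomp G U lam hUdet hspec
        ⟨![0,3,1,2], ![0,2,3,1], by decide, by decide⟩ s0 s3 s1 s2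
    · exact exists_of_decomp G U lam hUdet hspec
        ⟨![0,2,1,3], ![0,2,1,3], by decide, by decide⟩ s0 s2 s1 s3
    · nlinarith [mul_pos (mul_pos s0 s2) s3]
    · exact exists_of_decomp G U lam hUdet hspec
        (Equiv.refl _) s0 s1 s2 s3
    · nlinarith [mul_pos (mul_pos s0 s1) s3]
    · nlinarith [mul_pos (mul_pos s0 s1) s2]
    · exact absurd ⟨s0, s1, s2, s3⟩ hnotpos
end
end

section
/- Let (θ₁,...,θ₆) be a six-tuple of complex numbers in the set 𝔸, and let G = Gram(θ₁,...,θ₆) be its Gram matrix in the dihedral angles (a real symmetric 4×4 matrix, since cos(i t) = cosh t and cos(π − i t) = −cosh t are real). Then the following are equivalent: (1) (θ₁,...,θ₆) are the dihedral angles of a truncated hyperideal anti-de Sitter tetrahedron, i.e. there exists such a tetrahedron with vertices v₁,...,v₄ whose outward unit normal vectors u₁,...,u₄ satisfy ⟨u_k,u_l⟩ = cos θ_{ij} for every partition {i,j,k,l} = {1,2,3,4} (under the pair-labeling (θ₁₂,θ₁₃,θ₁₄,θ₂₃,θ₂₄,θ₃₄) = (θ₁,θ₂,θ₆,θ₃,θ₅,θ₄));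 (2) G has signature (2,2) (i.e. G = Mᵀ·diag(1,1,−1,−1)·M for some invertible real M), all diagonal cofactors G_{ii} are positive, and all off-diagonal cofactors G_{ij} (i ≠ j) are negative. -/
noncomputable section

/-- The vertices of a truncated hyperideal anti-de Sitter tetrahedron: four linearly independent
unit vectors such that each straight segment between two of them meets B^{2,2}. -/
def IsAdSTetra (v : Fin 4 → (Fin 4 → ℝ)) : Prop :=
  LinearIndependent ℝ v ∧ (∀ i, bil (v i) (v i) = 1) ∧
  ∀ i j, i ≠ j → ∃ t ∈ Set.Icc (0 : ℝ) 1,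
    bil (t • v i + (1 - t) • v j) (t • v i + (1 - t) • v j) < 0

/-- u₁,...,u₄ are the outward unit normal vectors of the tetrahedron with vertices v₁,...,v₄. -/
def IsOutwardNormal (v u : Fin 4 → (Fin 4 → ℝ)) : Prop :=
  ∀ i, 0 < bil (u i) (v i) ∧ |bil (u i) (u i)| = 1 ∧ ∀ j, j ≠ i → bil (u i) (v j) = 0

/-- z lies in i·ℝ_{>0}. -/
def posImag (z : ℂ) : Prop := z.re = 0 ∧ 0 < z.im

/-- z lies in π − i·ℝ_{>0}. -/
def piMinusPosImag (z : ℂ) : Prop := z.re = Real.pi ∧ z.im < 0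

/-- The set 𝔸 of allowed six-tuples of dihedral angles: exactly one opposite pair lies in
π − i·ℝ_{>0} and the remaining four entries lie in i·ℝ_{>0}. -/
def inA (θ₁ θ₂ θ₃ θ₄ θ₅ θ₆ : ℂ) : Prop :=
  (piMinusPosImag θ₁ ∧ piMinusPosImag θ₄ ∧
    posImag θ₂ ∧ posImag θ₃ ∧ posImag θ₅ ∧ posImag θ₆) ∨
  (piMinusPosImag θ₂ ∧ piMinusPosImag θ₅ ∧
    posImag θ₁ ∧ posImag θ₃ ∧ posImag θ₄ ∧ posImag θ₆) ∨
  (piMinusPosImag θ₃ ∧ piMinusPosImag θ₆ ∧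
    posImag θ₁ ∧ posImag θ₂ ∧ posImag θ₄ ∧ posImag θ₅)

/-- The (complex) Gram matrix in the dihedral angles. -/
def cGramAngle (θ₁ θ₂ θ₃ θ₄ θ₅ θ₆ : ℂ) : Matrix (Fin 4) (Fin 4) ℂ :=
  !![-1, Complex.cos θ₄, Complex.cos θ₅, Complex.cos θ₃;
     Complex.cos θ₄, -1, Complex.cos θ₆, Complex.cos θ₂;
     Complex.cos θ₅, Complex.cos θ₆, -1, Complex.cos θ₁;
     Complex.cos θ₃, Complex.cos θ₂, Complex.cos θ₁, -1]

/-- The real Gram matrix in the dihedral angles (the entries are real for θ in 𝔸). -/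
def rGramAngle (θ₁ θ₂ θ₃ θ₄ θ₅ θ₆ : ℂ) : Matrix (Fin 4) (Fin 4) ℝ :=
  fun i j => (cGramAngle θ₁ θ₂ θ₃ θ₄ θ₅ θ₆ i j).re

/-- A real symmetric 4×4 matrix has signature (2,2). -/
def sig22 (G : Matrix (Fin 4) (Fin 4) ℝ) : Prop :=
  ∃ M : Matrix (Fin 4) (Fin 4) ℝ, M.det ≠ 0 ∧
    G = M.transpose * Matrix.diagonal ![1, 1, -1, -1] * M

/-- The (i,j)-cofactor of a 4×4 real matrix. -/
def cof (G : Matrix (Fin 4) (Fin 4) ℝ) (i j : Fin 4) : ℝ := G.adjugate j i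


namespace AuxAdS

open Matrix

lemma sa00 : ((0:Fin 4).succAbove 0) = 1 := rfl
lemma sa01 : ((0:Fin 4).succAbove 1) = 2 := rfl
lemma sa02 : ((0:Fin 4).succAbove 2) = 3 := rfl
lemma sa10 : ((1:Fin 4).succAbove 0) = 0 := rfl
lemma sa11 : ((1:Fin 4).succAbove 1) = 2 := rfl
lemma sa12 : ((1:Fin 4).succAbove 2) = 3 := rfl
lemma sa20 : ((2:Fin 4).succAbove 0) = 0 := rfl
lemma sa21 : ((2:Fin 4).succAbove 1) = 1 := rfl
lemma sa22 : ((2:Fin 4).succAbove 2) = 3 := rfl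
lemma sa30 : ((3:Fin 4).succAbove 0) = 0 := rfl
lemma sa31 : ((3:Fin 4).succAbove 1) = 1 := rfl
lemma sa32 : ((3:Fin 4).succAbove 2) = 2 := rfl
lemma fs2 : (Fin.succ 2 : Fin 4) = 3 := rfl
lemma fs1 : (Fin.succ 1 : Fin 4) = 2 := rfl
lemma fs0 : (Fin.succ 0 : Fin 4) = 1 := rfl
lemma fm0 (h : 0 < 4) : (⟨0,h⟩ : Fin 4) = 0 := rfl
lemma fm1 (h : 1 < 4) : (⟨1,h⟩ : Fin 4) = 1 := rfl
lemma fm2 (h : 2 < 4) : (⟨2,h⟩ : Fin 4) = 2 := rfl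
lemma fm3 (h : 3 < 4) : (⟨3,h⟩ : Fin 4) = 3 := rfl
lemma cv3 : (((3:Fin 4)):ℕ) = 3 := rfl

lemma det4 (A : Matrix (Fin 4) (Fin 4) ℝ) : A.det = (A 0 0*A 1 1*A 2 2*A 3 3 - A 0 0*A 1 1*A 2 3*A 3 2 - A 0 0*A 1 2*A 2 1*A 3 3 + A 0 0*A 1 2*A 2 3*A 3 1 + A 0 0*A 1 3*A 2 1*A 3 2 - A 0 0*A 1 3*A 2 2*A 3 1 - A 0 1*A 1 0*A 2 2*A 3 3 + A 0 1*A 1 0*A 2 3*A 3 2 + A 0 1*A 1 2*A 2 0*A 3 3 - A 0 1*A 1 2*A 2 3*A 3 0 - A 0 1*A 1 3*A 2 0*A 3 2 + A 0 1*A 1 3*A 2 2*A 3 0 + A 0 2*A 1 0*A 2 1*A 3 3 - A 0 2*A 1 0*A 2 3*A 3 1 - A 0 2*A 1 1*A 2 0*A 3 3 + A 0 2*A 1 1*A 2 3*A 3 0 + A 0 2*A 1 3*A 2 0*A 3 1 - A 0 2*A 1 3*A 2 1*A 3 0 - A 0 3*A 1 0*A 2 1*A 3 2 + A 0 3*A 1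 0*A 2 2*A 3 1 + A 0 3*A 1 1*A 2 0*A 3 2 - A 0 3*A 1 1*A 2 2*A 3 0 - A 0 3*A 1 2*A 2 0*A 3 1 + A 0 3*A 1 2*A 2 1*A 3 0) := by
  rw [Matrix.det_succ_row_zero, Fin.sum_univ_four]
  simp only [Matrix.det_fin_three, Matrix.submatrix_apply, sa00, sa01, sa02, sa10, sa11, sa12, sa20, sa21, sa22, sa30, sa31, sa32, fs0, fs1, fs2]
  norm_num [cv3]
  ring

lemma adj4_00 (A : Matrix (Fin 4) (Fin 4) ℝ) : Matrix.adjugate A 0 0 = (A 1 1*A 2 2*A 3 3 - A 1 1*A 2 3*A 3 2 - A 1 2*A 2 1*A 3 3 + A 1 2*A 2 3*A 3 1 + A 1 3*A 2 1*A 3 2 - A 1 3*A 2 2*A 3 1) := by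
  rw [Matrix.adjugate_fin_succ_eq_det_submatrix, Matrix.det_fin_three]
  norm_num [Matrix.submatrix_apply, sa00, sa01, sa02, sa10, sa11, sa12, sa20, sa21, sa22, sa30, sa31, sa32, fs0, fs1, fs2, cv3]
  try ring

lemma adj4_01 (A : Matrix (Fin 4) (Fin 4) ℝ) : Matrix.adjugate A 0 1 = -(A 0 1*A 2 2*A 3 3 - A 0 1*A 2 3*A 3 2 - A 0 2*A 2 1*A 3 3 + A 0 2*A 2 3*A 3 1 + A 0 3*A 2 1*A 3 2 - A 0 3*A 2 2*A 3 1) := by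
  rw [Matrix.adjugate_fin_succ_eq_det_submatrix, Matrix.det_fin_three]
  norm_num [Matrix.submatrix_apply, sa00, sa01, sa02, sa10, sa11, sa12, sa20, sa21, sa22, sa30, sa31, sa32, fs0, fs1, fs2, cv3]
  try ring

lemma adj4_02 (A : Matrix (Fin 4) (Fin 4) ℝ) : Matrix.adjugate A 0 2 = (A 0 1*A 1 2*A 3 3 - A 0 1*A 1 3*A 3 2 - A 0 2*A 1 1*A 3 3 + A 0 2*A 1 3*A 3 1 + A 0 3*A 1 1*A 3 2 - A 0 3*A 1 2*A 3 1) := by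
  rw [Matrix.adjugate_fin_succ_eq_det_submatrix, Matrix.det_fin_three]
  norm_num [Matrix.submatrix_apply, sa00, sa01, sa02, sa10, sa11, sa12, sa20, sa21, sa22, sa30, sa31, sa32, fs0, fs1, fs2, cv3]
  try ring

lemma adj4_03 (A : Matrix (Fin 4) (Fin 4) ℝ) : Matrix.adjugate A 0 3 = -(A 0 1*A 1 2*A 2 3 - A 0 1*A 1 3*A 2 2 - A 0 2*A 1 1*A 2 3 + A 0 2*A 1 3*A 2 1 + A 0 3*A 1 1*A 2 2 - A 0 3*A 1 2*A 2 1) := by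
  rw [Matrix.adjugate_fin_succ_eq_det_submatrix, Matrix.det_fin_three]
  norm_num [Matrix.submatrix_apply, sa00, sa01, sa02, sa10, sa11, sa12, sa20, sa21, sa22, sa30, sa31, sa32, fs0, fs1, fs2, cv3]
  try ring

lemma adj4_10 (A : Matrix (Fin 4) (Fin 4) ℝ) : Matrix.adjugate A 1 0 = -(A 1 0*A 2 2*A 3 3 - A 1 0*A 2 3*A 3 2 - A 1 2*A 2 0*A 3 3 + A 1 2*A 2 3*A 3 0 + A 1 3*A 2 0*A 3 2 - A 1 3*A 2 2*A 3 0) := by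
  rw [Matrix.adjugate_fin_succ_eq_det_submatrix, Matrix.det_fin_three]
  norm_num [Matrix.submatrix_apply, sa00, sa01, sa02, sa10, sa11, sa12, sa20, sa21, sa22, sa30, sa31, sa32, fs0, fs1, fs2, cv3]
  try ring

lemma adj4_11 (A : Matrix (Fin 4) (Fin 4) ℝ) : Matrix.adjugate A 1 1 = (A 0 0*A 2 2*A 3 3 - A 0 0*A 2 3*A 3 2 - A 0 2*A 2 0*A 3 3 + A 0 2*A 2 3*A 3 0 + A 0 3*A 2 0*A 3 2 - A 0 3*A 2 2*A 3 0) := by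
  rw [Matrix.adjugate_fin_succ_eq_det_submatrix, Matrix.det_fin_three]
  norm_num [Matrix.submatrix_apply, sa00, sa01, sa02, sa10, sa11, sa12, sa20, sa21, sa22, sa30, sa31, sa32, fs0, fs1, fs2, cv3]
  try ring

lemma adj4_12 (A : Matrix (Fin 4) (Fin 4) ℝ) : Matrix.adjugate A 1 2 = -(A 0 0*A 1 2*A 3 3 - A 0 0*A 1 3*A 3 2 - A 0 2*A 1 0*A 3 3 + A 0 2*A 1 3*A 3 0 + A 0 3*A 1 0*A 3 2 - A 0 3*A 1 2*A 3 0) := by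
  rw [Matrix.adjugate_fin_succ_eq_det_submatrix, Matrix.det_fin_three]
  norm_num [Matrix.submatrix_apply, sa00, sa01, sa02, sa10, sa11, sa12, sa20, sa21, sa22, sa30, sa31, sa32, fs0, fs1, fs2, cv3]
  try ring

lemma adj4_13 (A : Matrix (Fin 4) (Fin 4) ℝ) : Matrix.adjugate A 1 3 = (A 0 0*A 1 2*A 2 3 - A 0 0*A 1 3*A 2 2 - A 0 2*A 1 0*A 2 3 + A 0 2*A 1 3*A 2 0 + A 0 3*A 1 0*A 2 2 - A 0 3*A 1 2*A 2 0) := by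
  rw [Matrix.adjugate_fin_succ_eq_det_submatrix, Matrix.det_fin_three]
  norm_num [Matrix.submatrix_apply, sa00, sa01, sa02, sa10, sa11, sa12, sa20, sa21, sa22, sa30, sa31, sa32, fs0, fs1, fs2, cv3]
  try ring

lemma adj4_20 (A : Matrix (Fin 4) (Fin 4) ℝ) : Matrix.adjugate A 2 0 = (A 1 0*A 2 1*A 3 3 - A 1 0*A 2 3*A 3 1 - A 1 1*A 2 0*A 3 3 + A 1 1*A 2 3*A 3 0 + A 1 3*A 2 0*A 3 1 - A 1 3*A 2 1*A 3 0) := by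
  rw [Matrix.adjugate_fin_succ_eq_det_submatrix, Matrix.det_fin_three]
  norm_num [Matrix.submatrix_apply, sa00, sa01, sa02, sa10, sa11, sa12, sa20, sa21, sa22, sa30, sa31, sa32, fs0, fs1, fs2, cv3]
  try ring

lemma adj4_21 (A : Matrix (Fin 4) (Fin 4) ℝ) : Matrix.adjugate A 2 1 = -(A 0 0*A 2 1*A 3 3 - A 0 0*A 2 3*A 3 1 - A 0 1*A 2 0*A 3 3 + A 0 1*A 2 3*A 3 0 + A 0 3*A 2 0*A 3 1 - A 0 3*A 2 1*A 3 0) := by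
  rw [Matrix.adjugate_fin_succ_eq_det_submatrix, Matrix.det_fin_three]
  norm_num [Matrix.submatrix_apply, sa00, sa01, sa02, sa10, sa11, sa12, sa20, sa21, sa22, sa30, sa31, sa32, fs0, fs1, fs2, cv3]
  try ring

lemma adj4_22 (A : Matrix (Fin 4) (Fin 4) ℝ) : Matrix.adjugate A 2 2 = (A 0 0*A 1 1*A 3 3 - A 0 0*A 1 3*A 3 1 - A 0 1*A 1 0*A 3 3 + A 0 1*A 1 3*A 3 0 + A 0 3*A 1 0*A 3 1 - A 0 3*A 1 1*A 3 0) := by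
  rw [Matrix.adjugate_fin_succ_eq_det_submatrix, Matrix.det_fin_three]
  norm_num [Matrix.submatrix_apply, sa00, sa01, sa02, sa10, sa11, sa12, sa20, sa21, sa22, sa30, sa31, sa32, fs0, fs1, fs2, cv3]
  try ring

lemma adj4_23 (A : Matrix (Fin 4) (Fin 4) ℝ) : Matrix.adjugate A 2 3 = -(A 0 0*A 1 1*A 2 3 - A 0 0*A 1 3*A 2 1 - A 0 1*A 1 0*A 2 3 + A 0 1*A 1 3*A 2 0 + A 0 3*A 1 0*A 2 1 - A 0 3*A 1 1*A 2 0) := by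
  rw [Matrix.adjugate_fin_succ_eq_det_submatrix, Matrix.det_fin_three]
  norm_num [Matrix.submatrix_apply, sa00, sa01, sa02, sa10, sa11, sa12, sa20, sa21, sa22, sa30, sa31, sa32, fs0, fs1, fs2, cv3]
  try ring

lemma adj4_30 (A : Matrix (Fin 4) (Fin 4) ℝ) : Matrix.adjugate A 3 0 = -(A 1 0*A 2 1*A 3 2 - A 1 0*A 2 2*A 3 1 - A 1 1*A 2 0*A 3 2 + A 1 1*A 2 2*A 3 0 + A 1 2*A 2 0*A 3 1 - A 1 2*A 2 1*A 3 0) := by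
  rw [Matrix.adjugate_fin_succ_eq_det_submatrix, Matrix.det_fin_three]
  norm_num [Matrix.submatrix_apply, sa00, sa01, sa02, sa10, sa11, sa12, sa20, sa21, sa22, sa30, sa31, sa32, fs0, fs1, fs2, cv3]
  try ring

lemma adj4_31 (A : Matrix (Fin 4) (Fin 4) ℝ) : Matrix.adjugate A 3 1 = (A 0 0*A 2 1*A 3 2 - A 0 0*A 2 2*A 3 1 - A 0 1*A 2 0*A 3 2 + A 0 1*A 2 2*A 3 0 + A 0 2*A 2 0*A 3 1 - A 0 2*A 2 1*A 3 0) := by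
  rw [Matrix.adjugate_fin_succ_eq_det_submatrix, Matrix.det_fin_three]
  norm_num [Matrix.submatrix_apply, sa00, sa01, sa02, sa10, sa11, sa12, sa20, sa21, sa22, sa30, sa31, sa32, fs0, fs1, fs2, cv3]
  try ring

lemma adj4_32 (A : Matrix (Fin 4) (Fin 4) ℝ) : Matrix.adjugate A 3 2 = -(A 0 0*A 1 1*A 3 2 - A 0 0*A 1 2*A 3 1 - A 0 1*A 1 0*A 3 2 + A 0 1*A 1 2*A 3 0 + A 0 2*A 1 0*A 3 1 - A 0 2*A 1 1*A 3 0) := by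
  rw [Matrix.adjugate_fin_succ_eq_det_submatrix, Matrix.det_fin_three]
  norm_num [Matrix.submatrix_apply, sa00, sa01, sa02, sa10, sa11, sa12, sa20, sa21, sa22, sa30, sa31, sa32, fs0, fs1, fs2, cv3]
  try ring

lemma adj4_33 (A : Matrix (Fin 4) (Fin 4) ℝ) : Matrix.adjugate A 3 3 = (A 0 0*A 1 1*A 2 2 - A 0 0*A 1 2*A 2 1 - A 0 1*A 1 0*A 2 2 + A 0 1*A 1 2*A 2 0 + A 0 2*A 1 0*A 2 1 - A 0 2*A 1 1*A 2 0) := by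
  rw [Matrix.adjugate_fin_succ_eq_det_submatrix, Matrix.det_fin_three]
  norm_num [Matrix.submatrix_apply, sa00, sa01, sa02, sa10, sa11, sa12, sa20, sa21, sa22, sa30, sa31, sa32, fs0, fs1, fs2, cv3]
  try ring


def Jm : Matrix (Fin 4) (Fin 4) ℝ := Matrix.diagonal ![1,1,-1,-1]

lemma Jm_mul_Jm : Jm * Jm = 1 := by
  rw [Jm, Matrix.diagonal_mul_diagonal]
  have : (fun i => ![1,1,-1,-1] i * ![(1:ℝ),1,-1,-1] i) = fun _ => (1:ℝ) := by
    funext i; fin_cases i <;> norm_num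
  rw [this, Matrix.diagonal_one]

lemma JJcancel (Y : Matrix (Fin 4) (Fin 4) ℝ) : Jm * (Jm * Y) = Y := by
  rw [← Matrix.mul_assoc, Jm_mul_Jm, Matrix.one_mul]

lemma Jm_transpose : Jmᵀ = Jm := Matrix.diagonal_transpose _

lemma Jm_inv : Jm⁻¹ = Jm := Matrix.inv_eq_right_inv Jm_mul_Jm

lemma det_Jm : Jm.det = 1 := by
  rw [Jm, Matrix.det_diagonal, Fin.prod_univ_four]; norm_num
  show (-1:ℝ) * -1 = 1; norm_num

lemma bil_col (A B : Matrix (Fin 4) (Fin 4) ℝ) (i j : Fin 4) :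
    (Aᵀ * Jm * B) i j = bil (fun k => A k i) (fun k => B k j) := by
  simp [Matrix.mul_apply, Fin.sum_univ_four, Jm, Matrix.diagonal, bil]
  ring

lemma bil_comm (x y : Fin 4 → ℝ) : bil x y = bil y x := by
  simp only [bil]; ring

lemma bil_expand (x y : Fin 4 → ℝ) (t : ℝ) :
    bil (t • x + (1-t) • y) (t • x + (1-t) • y)
      = t^2 * bil x x + 2*t*(1-t) * bil x y + (1-t)^2 * bil y y := by
  simp only [bil, Pi.add_apply, Pi.smul_apply, smul_eq_mul]; ring

lemma seg_iff {x y : Fin 4 → ℝ} (hx : bil x x = 1) (hy : bil y y = 1) :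
    (∃ t ∈ Set.Icc (0:ℝ) 1, bil (t • x + (1-t) • y) (t • x + (1-t) • y) < 0) ↔ bil x y < -1 := by
  constructor
  · rintro ⟨t, ⟨ht0, ht1⟩, h⟩
    rw [bil_expand, hx, hy] at h
    nlinarith [sq_nonneg (2*t-1), mul_nonneg ht0 (sub_nonneg.mpr ht1)]
  · intro h
    refine ⟨1/2, ⟨by norm_num, by norm_num⟩, ?_⟩
    rw [bil_expand, hx, hy]; nlinarith

lemma adj_eq_det_smul_inv {G : Matrix (Fin 4) (Fin 4) ℝ} (h : G.det ≠ 0) :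
    Matrix.adjugate G = G.det • G⁻¹ := by
  rw [Matrix.inv_def, smul_smul, Ring.inverse_eq_inv', mul_inv_cancel₀ h, one_smul]

lemma minor_neg {s t w : ℝ} (hs : s < -1) (ht : t < -1) (hw : w < -1) :
    1 + 2*(s*(t*w)) - s^2 - t^2 - w^2 < 0 := by
  have h1 : 1 < t*w := by nlinarith
  have h2 : s*(t*w) < -1 := by nlinarith
  nlinarith [sq_nonneg s, sq_nonneg t, sq_nonneg w]

lemma x_lt_neg_one {x A B R det di dj : ℝ} (hA : 0 < A) (hB : 0 < B) (hR : R < 0)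
    (hJ : A*B - R^2 < 0) (hdet : 0 < det) (hdi2 : di^2 = det / A) (hdj2 : dj^2 = det / B)
    (hdi : 0 < di) (hdj : 0 < dj) (hx : x = di * (det⁻¹ * R) * dj) : x < -1 := by
  have hdinv : (0:ℝ) < det⁻¹ := inv_pos.mpr hdet
  have hxneg : x < 0 := by
    rw [hx]
    exact mul_neg_of_neg_of_pos (mul_neg_of_pos_of_neg hdi (mul_neg_of_pos_of_neg hdinv hR)) hdj
  have hx2 : x^2 * (A*B) = R^2 := by
    rw [hx]
    have e : (di * (det⁻¹ * R) * dj)^2 = di^2 * dj^2 * (det⁻¹)^2 * R^2 := by ring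
    rw [e, hdi2, hdj2]
    field_simp
  have h1 : 1 < x^2 := by nlinarith [mul_pos hA hB]
  nlinarith

lemma cos_real {z : ℂ} (h : Real.sin z.re = 0) :
    Complex.cos z = ((Real.cos z.re * Real.cosh z.im : ℝ) : ℂ) := by
  rw [Complex.cos_eq, ← Complex.ofReal_cos, ← Complex.ofReal_sin, ← Complex.ofReal_cosh,
    ← Complex.ofReal_sinh, h]
  push_cast
  ring

lemma angle_props {z : ℂ} (h : posImag z ∨ piMinusPosImag z) :
    Complex.cos z = ((Complex.cos z).re : ℂ) ∧ 1 < ((Complex.cos z).re)^2 := by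
  have him : z.im ≠ 0 := by rcases h with ⟨_,h2⟩|⟨_,h2⟩; exacts [ne_of_gt h2, ne_of_lt h2]
  have hsin : Real.sin z.re = 0 := by
    rcases h with ⟨h1,_⟩|⟨h1,_⟩ <;> rw [h1] <;> simp [Real.sin_pi]
  have hcos : Real.cos z.re = 1 ∨ Real.cos z.re = -1 := by
    rcases h with ⟨h1,_⟩|⟨h1,_⟩ <;> rw [h1] <;> simp [Real.cos_pi]
  have he := cos_real hsin
  have hre : (Complex.cos z).re = Real.cos z.re * Real.cosh z.im := by
    rw [he, Complex.ofReal_re]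
  constructor
  · rw [hre]; exact he
  · rw [hre]
    have hco := Real.one_lt_cosh.mpr him
    rcases hcos with h|h <;> rw [h] <;> nlinarith

lemma jac01 (G : Matrix (Fin 4) (Fin 4) ℝ) (hd : ∀ i, G i i = -1)
    (h01 : G 1 0 = G 0 1) (h02 : G 2 0 = G 0 2) (h03 : G 3 0 = G 0 3)
    (h12 : G 2 1 = G 1 2) (h13 : G 3 1 = G 1 3) (h23 : G 3 2 = G 2 3) :
    Matrix.adjugate G 0 0 * Matrix.adjugate G 1 1 - Matrix.adjugate G 0 1 * Matrix.adjugate G 1 0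
      = G.det * (1 - (G 2 3)^2) := by
  rw [adj4_00, adj4_11, adj4_01, adj4_10, det4]
  simp only [hd, h01, h02, h03, h12, h13, h23]; ring

lemma jac02 (G : Matrix (Fin 4) (Fin 4) ℝ) (hd : ∀ i, G i i = -1)
    (h01 : G 1 0 = G 0 1) (h02 : G 2 0 = G 0 2) (h03 : G 3 0 = G 0 3)
    (h12 : G 2 1 = G 1 2) (h13 : G 3 1 = G 1 3) (h23 : G 3 2 = G 2 3) :
    Matrix.adjugate G 0 0 * Matrix.adjugate G 2 2 - Matrix.adjugate G 0 2 * Matrix.adjugate G 2 0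
      = G.det * (1 - (G 1 3)^2) := by
  rw [adj4_00, adj4_22, adj4_02, adj4_20, det4]
  simp only [hd, h01, h02, h03, h12, h13, h23]; ring

lemma jac03 (G : Matrix (Fin 4) (Fin 4) ℝ) (hd : ∀ i, G i i = -1)
    (h01 : G 1 0 = G 0 1) (h02 : G 2 0 = G 0 2) (h03 : G 3 0 = G 0 3)
    (h12 : G 2 1 = G 1 2) (h13 : G 3 1 = G 1 3) (h23 : G 3 2 = G 2 3) :
    Matrix.adjugate G 0 0 * Matrix.adjugate G 3 3 - Matrix.adjugate G 0 3 * Matrix.adjugate G 3 0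
      = G.det * (1 - (G 1 2)^2) := by
  rw [adj4_00, adj4_33, adj4_03, adj4_30, det4]
  simp only [hd, h01, h02, h03, h12, h13, h23]; ring

lemma jac12 (G : Matrix (Fin 4) (Fin 4) ℝ) (hd : ∀ i, G i i = -1)
    (h01 : G 1 0 = G 0 1) (h02 : G 2 0 = G 0 2) (h03 : G 3 0 = G 0 3)
    (h12 : G 2 1 = G 1 2) (h13 : G 3 1 = G 1 3) (h23 : G 3 2 = G 2 3) :
    Matrix.adjugate G 1 1 * Matrix.adjugate G 2 2 - Matrix.adjugate G 1 2 * Matrix.adjugate G 2 1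
      = G.det * (1 - (G 0 3)^2) := by
  rw [adj4_11, adj4_22, adj4_12, adj4_21, det4]
  simp only [hd, h01, h02, h03, h12, h13, h23]; ring

lemma jac13 (G : Matrix (Fin 4) (Fin 4) ℝ) (hd : ∀ i, G i i = -1)
    (h01 : G 1 0 = G 0 1) (h02 : G 2 0 = G 0 2) (h03 : G 3 0 = G 0 3)
    (h12 : G 2 1 = G 1 2) (h13 : G 3 1 = G 1 3) (h23 : G 3 2 = G 2 3) :
    Matrix.adjugate G 1 1 * Matrix.adjugate G 3 3 - Matrix.adjugate G 1 3 * Matrix.adjugate G 3 1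
      = G.det * (1 - (G 0 2)^2) := by
  rw [adj4_11, adj4_33, adj4_13, adj4_31, det4]
  simp only [hd, h01, h02, h03, h12, h13, h23]; ring

lemma jac23 (G : Matrix (Fin 4) (Fin 4) ℝ) (hd : ∀ i, G i i = -1)
    (h01 : G 1 0 = G 0 1) (h02 : G 2 0 = G 0 2) (h03 : G 3 0 = G 0 3)
    (h12 : G 2 1 = G 1 2) (h13 : G 3 1 = G 1 3) (h23 : G 3 2 = G 2 3) :
    Matrix.adjugate G 2 2 * Matrix.adjugate G 3 3 - Matrix.adjugate G 2 3 * Matrix.adjugate G 3 2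
      = G.det * (1 - (G 0 1)^2) := by
  rw [adj4_22, adj4_33, adj4_23, adj4_32, det4]
  simp only [hd, h01, h02, h03, h12, h13, h23]; ring

end AuxAdS

namespace AuxAdS
open Matrix

lemma diag_sandwich (d : Fin 4 → ℝ) (X : Matrix (Fin 4) (Fin 4) ℝ) (i j : Fin 4) :
    (Matrix.diagonal d * X * Matrix.diagonal d) i j = d i * X i j * d j := by
  rw [Matrix.mul_diagonal, Matrix.diagonal_mul]

lemma inv_entry (G : Matrix (Fin 4) (Fin 4) ℝ) (i j : Fin 4) :
    G⁻¹ i j = (G.det)⁻¹ * Matrix.adjugate G i j := by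
  rw [Matrix.inv_def, Ring.inverse_eq_inv']
  simp [Matrix.smul_apply, smul_eq_mul]

end AuxAdS

set_option maxHeartbeats 4000000 in
open Matrix AuxAdS in
/-- Criterion for a six-tuple in 𝔸 to be the dihedral angles of a truncated hyperideal
anti-de Sitter tetrahedron: the Gram matrix has signature (2,2), positive diagonal cofactors
and negative off-diagonal cofactors. -/
theorem stmt2 (θ₁ θ₂ θ₃ θ₄ θ₅ θ₆ : ℂ) (hθ : inA θ₁ θ₂ θ₃ θ₄ θ₅ θ₆) :
    (∃ v u : Fin 4 → (Fin 4 → ℝ), IsAdSTetra v ∧ IsOutwardNormal v u ∧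
      ∀ k l, k ≠ l → (bil (u k) (u l) : ℂ) = cGramAngle θ₁ θ₂ θ₃ θ₄ θ₅ θ₆ k l) ↔
    (sig22 (rGramAngle θ₁ θ₂ θ₃ θ₄ θ₅ θ₆) ∧
      (∀ i, 0 < cof (rGramAngle θ₁ θ₂ θ₃ θ₄ θ₅ θ₆) i i) ∧
      (∀ i j, i ≠ j → cof (rGramAngle θ₁ θ₂ θ₃ θ₄ θ₅ θ₆) i j < 0)) := by
  classical
  have hor : (posImag θ₁ ∨ piMinusPosImag θ₁) ∧ (posImag θ₂ ∨ piMinusPosImag θ₂) ∧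
      (posImag θ₃ ∨ piMinusPosImag θ₃) ∧ (posImag θ₄ ∨ piMinusPosImag θ₄) ∧
      (posImag θ₅ ∨ piMinusPosImag θ₅) ∧ (posImag θ₆ ∨ piMinusPosImag θ₆) := by
    unfold inA at hθ; tauto
  obtain ⟨h1, h2, h3, h4, h5, h6⟩ := hor
  obtain ⟨hre1, hsq1⟩ := angle_props h1
  obtain ⟨hre2, hsq2⟩ := angle_props h2
  obtain ⟨hre3, hsq3⟩ := angle_props h3
  obtain ⟨hre4, hsq4⟩ := angle_props h4
  obtain ⟨hre5, hsq5⟩ := angle_props h5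
  obtain ⟨hre6, hsq6⟩ := angle_props h6
  obtain ⟨G, hG⟩ : ∃ G, G = rGramAngle θ₁ θ₂ θ₃ θ₄ θ₅ θ₆ := ⟨_, rfl⟩
  rw [show rGramAngle θ₁ θ₂ θ₃ θ₄ θ₅ θ₆ = G from hG.symm]
  have hdG : ∀ i, G i i = -1 := by
    rw [hG]; intro i; fin_cases i <;> simp [rGramAngle, cGramAngle]
  have hsymG : ∀ i j : Fin 4, G j i = G i j := by
    rw [hG]; intro i j; fin_cases i <;> fin_cases j <;> simp [rGramAngle, cGramAngle]
  have e01 : G 0 1 = (Complex.cos θ₄).re := by rw [hG]; simp [rGramAngle, cGramAngle]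
  have e02 : G 0 2 = (Complex.cos θ₅).re := by rw [hG]; simp [rGramAngle, cGramAngle]
  have e03 : G 0 3 = (Complex.cos θ₃).re := by rw [hG]; simp [rGramAngle, cGramAngle]
  have e12 : G 1 2 = (Complex.cos θ₆).re := by rw [hG]; simp [rGramAngle, cGramAngle]
  have e13 : G 1 3 = (Complex.cos θ₂).re := by rw [hG]; simp [rGramAngle, cGramAngle]
  have e23 : G 2 3 = (Complex.cos θ₁).re := by rw [hG]; simp [rGramAngle, cGramAngle]
  have hcg : ∀ k l, ((G k l : ℝ) : ℂ) = cGramAngle θ₁ θ₂ θ₃ θ₄ θ₅ θ₆ k l := by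
    rw [hG]; intro k l
    fin_cases k <;> fin_cases l <;>
      simp [rGramAngle, cGramAngle] <;>
      first
        | exact hre1.symm | exact hre2.symm | exact hre3.symm
        | exact hre4.symm | exact hre5.symm | exact hre6.symm
        | norm_num
  have hGsym : Gᵀ = G := by
    ext i j; rw [Matrix.transpose_apply]; exact hsymG i j
  have hadjsym : ∀ i j, Matrix.adjugate G i j = Matrix.adjugate G j i := by
    intro i j
    conv_lhs => rw [← hGsym, ← Matrix.adjugate_transpose]
    rw [Matrix.transpose_apply]
  constructor
  · -- forward direction
    rintro ⟨v, u, ⟨hlin, hunit, hseg⟩, hnorm, hgram⟩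
    obtain ⟨V, hVeq⟩ : ∃ V : Matrix (Fin 4) (Fin 4) ℝ, V = (Matrix.of v)ᵀ := ⟨_, rfl⟩
    obtain ⟨U, hUeq⟩ : ∃ U : Matrix (Fin 4) (Fin 4) ℝ, U = (Matrix.of u)ᵀ := ⟨_, rfl⟩
    have hVcol : ∀ i, (fun k => V k i) = v i := by rw [hVeq]; intro i; rfl
    have hUcol : ∀ i, (fun k => U k i) = u i := by rw [hUeq]; intro i; rfl
    have hVdet : V.det ≠ 0 := by
      have h0 : IsUnit (Matrix.of v) := Matrix.linearIndependent_rows_iff_isUnit.mp hlin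
      have ha : (Matrix.of v).det ≠ 0 := ((Matrix.isUnit_iff_isUnit_det _).mp h0).ne_zero
      rw [hVeq, Matrix.det_transpose]; exact ha
    have hVunit : IsUnit V.det := isUnit_iff_ne_zero.mpr hVdet
    obtain ⟨d, hdeq⟩ : ∃ d : Fin 4 → ℝ, d = fun i => bil (u i) (v i) := ⟨_, rfl⟩
    have hd : ∀ i, 0 < d i := by rw [hdeq]; exact fun i => (hnorm i).1
    obtain ⟨D, hDeq⟩ : ∃ D : Matrix (Fin 4) (Fin 4) ℝ, D = Matrix.diagonal d := ⟨_, rfl⟩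
    have hD : Uᵀ * Jm * V = D := by
      ext i j
      rw [bil_col, hUcol, hVcol, hDeq]
      by_cases hij : i = j
      · subst hij; rw [Matrix.diagonal_apply_eq, hdeq]
      · rw [Matrix.diagonal_apply_ne _ hij]
        exact (hnorm i).2.2 j (fun hh => hij hh.symm)
    obtain ⟨P, hPeq⟩ : ∃ P : Matrix (Fin 4) (Fin 4) ℝ, P = Vᵀ * Jm * V := ⟨_, rfl⟩
    have hbilP : ∀ i j, P i j = bil (v i) (v j) := by
      intro i j
      rw [hPeq, bil_col, hVcol, hVcol]
    have hPd : ∀ i, P i i = 1 := fun i => by rw [hbilP]; exact hunit i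
    have hPoff : ∀ i j, i ≠ j → P i j < -1 := by
      intro i j hij
      rw [hbilP]
      exact (seg_iff (hunit i) (hunit j)).mp (hseg i j hij)
    have hPsym : ∀ i j : Fin 4, P j i = P i j := by
      intro i j; rw [hbilP, hbilP]; exact bil_comm _ _
    have hdetP : P.det = V.det ^ 2 := by
      rw [hPeq, Matrix.det_mul, Matrix.det_mul, Matrix.det_transpose, det_Jm]; ring
    have hdetPpos : 0 < P.det := by
      rw [hdetP]
      exact lt_of_le_of_ne (sq_nonneg _) (Ne.symm (pow_ne_zero 2 hVdet))
    have hPunit : IsUnit P.det := isUnit_iff_ne_zero.mpr hdetPpos.ne'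
    have hUt : Uᵀ = D * V⁻¹ * Jm := by
      have h3 : Uᵀ * Jm * V * V⁻¹ = D * V⁻¹ := by rw [hD]
      rw [Matrix.mul_assoc (Uᵀ * Jm), Matrix.mul_nonsing_inv V hVunit, Matrix.mul_one] at h3
      have h4 : Uᵀ * Jm * Jm = D * V⁻¹ * Jm := by rw [h3]
      rwa [Matrix.mul_assoc, Jm_mul_Jm, Matrix.mul_one] at h4
    have hU : U = Jm * (V⁻¹)ᵀ * D := by
      have h5 := congrArg Matrix.transpose hUt
      rw [Matrix.transpose_transpose] at h5
      rw [h5, Matrix.transpose_mul, Matrix.transpose_mul, Jm_transpose, hDeq,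
        Matrix.diagonal_transpose, ← hDeq, Matrix.mul_assoc]
    have hPinv : P⁻¹ = V⁻¹ * (Jm * (V⁻¹)ᵀ) := by
      rw [hPeq, Matrix.mul_inv_rev, Matrix.mul_inv_rev, Jm_inv,
        Matrix.transpose_nonsing_inv]
    have hGu : Uᵀ * Jm * U = D * P⁻¹ * D := by
      rw [hUt, hU, hPinv]
      simp only [Matrix.mul_assoc, JJcancel]
    have hbilu : ∀ i j, bil (u i) (u j) = (D * P⁻¹ * D) i j := by
      intro i j
      rw [← hGu, bil_col, hUcol, hUcol]
    have hadjPd : ∀ i, Matrix.adjugate P i i < 0 := by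
      intro i
      fin_cases i
      · show Matrix.adjugate P 0 0 < 0
        have h : Matrix.adjugate P 0 0
            = 1 + 2*(P 1 2*(P 1 3*P 2 3)) - (P 1 2)^2 - (P 1 3)^2 - (P 2 3)^2 := by
          rw [adj4_00]
          simp only [hPd, hPsym 1 2, hPsym 1 3, hPsym 2 3]; ring
        rw [h]
        exact minor_neg (hPoff 1 2 (by decide)) (hPoff 1 3 (by decide)) (hPoff 2 3 (by decide))
      · show Matrix.adjugate P 1 1 < 0
        have h : Matrix.adjugate P 1 1
            = 1 + 2*(P 0 2*(P 0 3*P 2 3)) - (P 0 2)^2 - (P 0 3)^2 - (P 2 3)^2 := by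
          rw [adj4_11]
          simp only [hPd, hPsym 0 2, hPsym 0 3, hPsym 2 3]; ring
        rw [h]
        exact minor_neg (hPoff 0 2 (by decide)) (hPoff 0 3 (by decide)) (hPoff 2 3 (by decide))
      · show Matrix.adjugate P 2 2 < 0
        have h : Matrix.adjugate P 2 2
            = 1 + 2*(P 0 1*(P 0 3*P 1 3)) - (P 0 1)^2 - (P 0 3)^2 - (P 1 3)^2 := by
          rw [adj4_22]
          simp only [hPd, hPsym 0 1, hPsym 0 3, hPsym 1 3]; ring
        rw [h]
        exact minor_neg (hPoff 0 1 (by decide)) (hPoff 0 3 (by decide)) (hPoff 1 3 (by decide))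
      · show Matrix.adjugate P 3 3 < 0
        have h : Matrix.adjugate P 3 3
            = 1 + 2*(P 0 1*(P 0 2*P 1 2)) - (P 0 1)^2 - (P 0 2)^2 - (P 1 2)^2 := by
          rw [adj4_33]
          simp only [hPd, hPsym 0 1, hPsym 0 2, hPsym 1 2]; ring
        rw [h]
        exact minor_neg (hPoff 0 1 (by decide)) (hPoff 0 2 (by decide)) (hPoff 1 2 (by decide))
    have hbiluu_neg : ∀ i, bil (u i) (u i) < 0 := by
      intro i
      rw [hbilu i i, hDeq, diag_sandwich, inv_entry]
      have hh2 : (0:ℝ) < P.det⁻¹ := inv_pos.mpr hdetPpos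
      exact mul_neg_of_neg_of_pos
        (mul_neg_of_pos_of_neg (hd i) (mul_neg_of_pos_of_neg hh2 (hadjPd i))) (hd i)
    have hbiluu : ∀ i, bil (u i) (u i) = -1 := by
      intro i
      have habs := (hnorm i).2.1
      rcases (abs_eq (by norm_num : (0:ℝ) ≤ 1)).mp habs with h|h
      · exact absurd (hbiluu_neg i) (by rw [h]; norm_num)
      · exact h
    have hGU : G = Uᵀ * Jm * U := by
      ext i j
      rw [bil_col, hUcol, hUcol]
      by_cases hij : i = j
      · subst hij
        rw [hdG i]
        exact (hbiluu i).symm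
      · have hgr := congrArg Complex.re (hgram i j hij)
        rw [Complex.ofReal_re] at hgr
        rw [hG]
        exact hgr.symm
    have hUdet : U.det ≠ 0 := by
      intro h0
      have h1 : (Uᵀ * Jm * V).det = D.det := by rw [hD]
      rw [Matrix.det_mul, Matrix.det_mul, Matrix.det_transpose, det_Jm, h0] at h1
      have h2 : D.det = ∏ i, d i := by rw [hDeq, Matrix.det_diagonal]
      have h3 : 0 < ∏ i, d i := Finset.prod_pos (fun i _ => hd i)
      rw [h2] at h1
      simp at h1
      rw [← h1] at h3
      exact lt_irrefl _ h3
    have hdetG : G.det = U.det ^ 2 := by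
      rw [hGU, Matrix.det_mul, Matrix.det_mul, Matrix.det_transpose, det_Jm]; ring
    have hdetGpos : 0 < G.det := by
      rw [hdetG]
      exact lt_of_le_of_ne (sq_nonneg _) (Ne.symm (pow_ne_zero 2 hUdet))
    have hGDP : G = D * P⁻¹ * D := by rw [hGU, hGu]
    have hDinv : D⁻¹ = Matrix.diagonal (fun i => (d i)⁻¹) := by
      apply Matrix.inv_eq_right_inv
      rw [hDeq, Matrix.diagonal_mul_diagonal]
      have : (fun i => d i * (d i)⁻¹) = fun _ => (1:ℝ) := by
        funext i; exact mul_inv_cancel₀ (hd i).ne'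
      rw [this, Matrix.diagonal_one]
    have hGinv : G⁻¹
        = Matrix.diagonal (fun i => (d i)⁻¹) * P * Matrix.diagonal (fun i => (d i)⁻¹) := by
      rw [hGDP, Matrix.mul_inv_rev, Matrix.mul_inv_rev, Matrix.nonsing_inv_nonsing_inv P hPunit,
        hDinv, Matrix.mul_assoc]
    have hcofG : ∀ i j, Matrix.adjugate G j i = G.det * ((d j)⁻¹ * P j i * (d i)⁻¹) := by
      intro i j
      rw [adj_eq_det_smul_inv hdetGpos.ne', Matrix.smul_apply, smul_eq_mul, hGinv, diag_sandwich]
    refine ⟨⟨U, hUdet, hGU⟩, ?_, ?_⟩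
    · intro i
      show (0:ℝ) < Matrix.adjugate G i i
      rw [hcofG i i, hPd i]
      have h2 := inv_pos.mpr (hd i)
      exact mul_pos hdetGpos (mul_pos (mul_pos h2 one_pos) h2)
    · intro i j hij
      show Matrix.adjugate G j i < 0
      rw [hcofG i j]
      have hji : j ≠ i := fun hh => hij hh.symm
      have h1 : P j i < 0 := lt_trans (hPoff j i hji) (by norm_num)
      have h2 := inv_pos.mpr (hd i)
      have h3 := inv_pos.mpr (hd j)
      exact mul_neg_of_pos_of_neg hdetGpos
        (mul_neg_of_neg_of_pos (mul_neg_of_pos_of_neg h3 h1) h2)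
  · -- backward direction
    rintro ⟨⟨M, hdetM, hGM⟩, hcd, hco⟩
    have hMunit : IsUnit M.det := isUnit_iff_ne_zero.mpr hdetM
    have hGM' : G = Mᵀ * Jm * M := hGM
    have hadj_d : ∀ i, 0 < Matrix.adjugate G i i := fun i => hcd i
    have hadj_off : ∀ i j, i ≠ j → Matrix.adjugate G i j < 0 := by
      intro i j hij
      exact hco j i (fun hh => hij hh.symm)
    have hdetGq : G.det = M.det ^ 2 := by
      rw [hGM', Matrix.det_mul, Matrix.det_mul, Matrix.det_transpose, det_Jm]; ring
    have hdetGpos : 0 < G.det := by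
      rw [hdetGq]
      exact lt_of_le_of_ne (sq_nonneg _) (Ne.symm (pow_ne_zero 2 hdetM))
    obtain ⟨d, hdeq⟩ : ∃ d : Fin 4 → ℝ,
        d = fun i => Real.sqrt (G.det / Matrix.adjugate G i i) := ⟨_, rfl⟩
    have hdvpos : ∀ i, 0 < G.det / Matrix.adjugate G i i :=
      fun i => div_pos hdetGpos (hadj_d i)
    have hd : ∀ i, 0 < d i := by
      rw [hdeq]; exact fun i => Real.sqrt_pos.mpr (hdvpos i)
    have hdsq : ∀ i, (d i)^2 = G.det / Matrix.adjugate G i i := by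
      rw [hdeq]; exact fun i => Real.sq_sqrt (hdvpos i).le
    obtain ⟨D, hDeq⟩ : ∃ D : Matrix (Fin 4) (Fin 4) ℝ, D = Matrix.diagonal d := ⟨_, rfl⟩
    obtain ⟨V, hVeq⟩ : ∃ V : Matrix (Fin 4) (Fin 4) ℝ, V = Jm * (M⁻¹)ᵀ * D := ⟨_, rfl⟩
    obtain ⟨v, hveq⟩ : ∃ v : Fin 4 → (Fin 4 → ℝ), v = fun i k => V k i := ⟨_, rfl⟩
    obtain ⟨u, hueq⟩ : ∃ u : Fin 4 → (Fin 4 → ℝ), u = fun i k => M k i := ⟨_, rfl⟩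
    have hvcol : ∀ i, (fun k => V k i) = v i := by rw [hveq]; intro i; rfl
    have hucol : ∀ i, (fun k => M k i) = u i := by rw [hueq]; intro i; rfl
    have hMMT : Mᵀ * (M⁻¹)ᵀ = 1 := by
      rw [← Matrix.transpose_mul, Matrix.nonsing_inv_mul M hMunit, Matrix.transpose_one]
    have hUV : Mᵀ * Jm * V = D := by
      rw [hVeq]
      calc Mᵀ * Jm * (Jm * (M⁻¹)ᵀ * D)
          = Mᵀ * (Jm * (Jm * ((M⁻¹)ᵀ * D))) := by simp only [Matrix.mul_assoc]
        _ = Mᵀ * ((M⁻¹)ᵀ * D) := by rw [JJcancel]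
        _ = Mᵀ * (M⁻¹)ᵀ * D := by rw [Matrix.mul_assoc]
        _ = D := by rw [hMMT, Matrix.one_mul]
    have hVt : Vᵀ = D * (M⁻¹ * Jm) := by
      rw [hVeq, Matrix.transpose_mul, Matrix.transpose_mul, Jm_transpose,
        Matrix.transpose_transpose, hDeq, Matrix.diagonal_transpose, ← hDeq]
    have hGinv : G⁻¹ = M⁻¹ * (Jm * (M⁻¹)ᵀ) := by
      rw [hGM', Matrix.mul_inv_rev, Matrix.mul_inv_rev, Jm_inv,
        Matrix.transpose_nonsing_inv]
    have hVV : Vᵀ * Jm * V = D * G⁻¹ * D := by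
      rw [hVt, hVeq, hGinv]
      simp only [Matrix.mul_assoc, JJcancel]
    have hbilvv : ∀ i j, bil (v i) (v j) = d i * (G.det⁻¹ * Matrix.adjugate G i j) * d j := by
      intro i j
      rw [← hvcol, ← hvcol, ← bil_col, hVV, hDeq, diag_sandwich, inv_entry]
    have hvunit : ∀ i, bil (v i) (v i) = 1 := by
      intro i
      rw [hbilvv i i]
      have h2 := hdsq i
      have hAne := (hadj_d i).ne'
      have hDne := hdetGpos.ne'
      field_simp at h2
      field_simp
      linear_combination h2
    have hJacAll : ∀ i j : Fin 4, i ≠ j →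
        Matrix.adjugate G i i * Matrix.adjugate G j j - (Matrix.adjugate G i j)^2 < 0 := by
      have hs01 := hsymG 0 1
      have hs02 := hsymG 0 2
      have hs03 := hsymG 0 3
      have hs12 := hsymG 1 2
      have hs13 := hsymG 1 3
      have hs23 := hsymG 2 3
      have j01 := jac01 G hdG hs01 hs02 hs03 hs12 hs13 hs23
      have j02 := jac02 G hdG hs01 hs02 hs03 hs12 hs13 hs23
      have j03 := jac03 G hdG hs01 hs02 hs03 hs12 hs13 hs23
      have j12 := jac12 G hdG hs01 hs02 hs03 hs12 hs13 hs23
      have j13 := jac13 G hdG hs01 hs02 hs03 hs12 hs13 hs23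
      have j23 := jac23 G hdG hs01 hs02 hs03 hs12 hs13 hs23
      rw [hadjsym 1 0] at j01
      rw [hadjsym 2 0] at j02
      rw [hadjsym 3 0] at j03
      rw [hadjsym 2 1] at j12
      rw [hadjsym 3 1] at j13
      rw [hadjsym 3 2] at j23
      have hg01 : 1 < (G 2 3)^2 := by rw [e23]; exact hsq1
      have hg02 : 1 < (G 1 3)^2 := by rw [e13]; exact hsq2
      have hg03 : 1 < (G 1 2)^2 := by rw [e12]; exact hsq6
      have hg12 : 1 < (G 0 3)^2 := by rw [e03]; exact hsq3
      have hg13 : 1 < (G 0 2)^2 := by rw [e02]; exact hsq5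
      have hg23 : 1 < (G 0 1)^2 := by rw [e01]; exact hsq4
      have k01 : Matrix.adjugate G 0 0 * Matrix.adjugate G 1 1 - (Matrix.adjugate G 0 1)^2 < 0 := by
        linarith [j01, mul_pos hdetGpos (show (0:ℝ) < (G 2 3)^2 - 1 by linarith)]
      have k02 : Matrix.adjugate G 0 0 * Matrix.adjugate G 2 2 - (Matrix.adjugate G 0 2)^2 < 0 := by
        linarith [j02, mul_pos hdetGpos (show (0:ℝ) < (G 1 3)^2 - 1 by linarith)]
      have k03 : Matrix.adjugate G 0 0 * Matrix.adjugate G 3 3 - (Matrix.adjugate G 0 3)^2 < 0 := by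
        linarith [j03, mul_pos hdetGpos (show (0:ℝ) < (G 1 2)^2 - 1 by linarith)]
      have k12 : Matrix.adjugate G 1 1 * Matrix.adjugate G 2 2 - (Matrix.adjugate G 1 2)^2 < 0 := by
        linarith [j12, mul_pos hdetGpos (show (0:ℝ) < (G 0 3)^2 - 1 by linarith)]
      have k13 : Matrix.adjugate G 1 1 * Matrix.adjugate G 3 3 - (Matrix.adjugate G 1 3)^2 < 0 := by
        linarith [j13, mul_pos hdetGpos (show (0:ℝ) < (G 0 2)^2 - 1 by linarith)]
      have k23 : Matrix.adjugate G 2 2 * Matrix.adjugate G 3 3 - (Matrix.adjugate G 2 3)^2 < 0 := by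
        linarith [j23, mul_pos hdetGpos (show (0:ℝ) < (G 0 1)^2 - 1 by linarith)]
      intro i j hij
      fin_cases i <;> fin_cases j <;> simp only [fm0, fm1, fm2, fm3] <;>
        first
          | exact absurd rfl hij
          | exact k01 | exact k02 | exact k03 | exact k12 | exact k13 | exact k23
          | (rw [hadjsym 1 0]; linarith [k01])
          | (rw [hadjsym 2 0]; linarith [k02])
          | (rw [hadjsym 3 0]; linarith [k03])
          | (rw [hadjsym 2 1]; linarith [k12])
          | (rw [hadjsym 3 1]; linarith [k13])
          | (rw [hadjsym 3 2]; linarith [k23])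
    have hoff : ∀ i j : Fin 4, i ≠ j → bil (v i) (v j) < -1 := by
      intro i j hij
      exact x_lt_neg_one (hadj_d i) (hadj_d j) (hadj_off i j hij) (hJacAll i j hij)
        hdetGpos (hdsq i) (hdsq j) (hd i) (hd j) (hbilvv i j)
    have hVdet : V.det ≠ 0 := by
      rw [hVeq, Matrix.det_mul, Matrix.det_mul, det_Jm, Matrix.det_transpose,
        Matrix.det_nonsing_inv, Ring.inverse_eq_inv', hDeq, Matrix.det_diagonal]
      have h3 : 0 < ∏ i, d i := Finset.prod_pos (fun i _ => hd i)
      have h4 : M.det⁻¹ ≠ 0 := inv_ne_zero hdetM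
      intro hc
      rw [one_mul] at hc
      rcases mul_eq_zero.mp hc with h|h
      · exact h4 h
      · exact h3.ne' h
    have hlinv : LinearIndependent ℝ v := by
      have h0 : IsUnit (Vᵀ).det :=
        isUnit_iff_ne_zero.mpr (by rw [Matrix.det_transpose]; exact hVdet)
      have h1 : LinearIndependent ℝ (fun i => Vᵀ i) :=
        Matrix.linearIndependent_rows_iff_isUnit.mpr ((Matrix.isUnit_iff_isUnit_det _).mpr h0)
      rw [hveq]
      exact h1
    have hbiluv : ∀ i j, bil (u i) (v j) = D i j := by
      intro i j
      rw [← hucol, ← hvcol, ← bil_col, hUV]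
    have hbiluu : ∀ i j, bil (u i) (u j) = G i j := by
      intro i j
      rw [← hucol, ← hucol, ← bil_col, ← hGM']
    refine ⟨v, u, ⟨hlinv, hvunit, ?_⟩, ?_, ?_⟩
    · intro i j hij
      exact (seg_iff (hvunit i) (hvunit j)).mpr (hoff i j hij)
    · intro i
      refine ⟨?_, ?_, ?_⟩
      · rw [hbiluv i i, hDeq, Matrix.diagonal_apply_eq]; exact hd i
      · rw [hbiluu i i, hdG i]; norm_num
      · intro j hj
        rw [hbiluv i j, hDeq, Matrix.diagonal_apply_ne _ (fun hh => hj hh.symm)]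
    · intro k l _
      rw [hbiluu k l]
      exact hcg k l
end
end

section
/- Let v₁,...,v₄ be the vertices of a truncated hyperideal anti-de Sitter tetrahedron, let G be the 4×4 matrix with entries G_{ij} = ⟨vᵢ,vⱼ⟩, and let C_{ij} denote the (i,j)-cofactor of G. Then det G > 0, C_{ii} < 0 for every i, and for each i the vector uᵢ := (Σ_{j=1}^{4} C_{ij} vⱼ)/√(−C_{ii}·det G) is well defined and satisfies: ⟨uᵢ,vᵢ⟩ = √(det G / (−C_{ii})) > 0, ⟨uᵢ,uᵢ⟩ = −1, and ⟨uᵢ,vⱼ⟩ = 0 for every j ≠ i; moreover uᵢ is the unique vector with ⟨uᵢ,vᵢ⟩ > 0, |⟨uᵢ,uᵢ⟩| = 1 and ⟨uᵢ,vⱼ⟩ = 0 for all j ≠ i (the outward unit normal). Finally, for all i,j one has ⟨uᵢ,uⱼ⟩ = C_{ij}/√(C_{ii}·C_{jj}). -/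
noncomputable section

lemma bil_comm (x y : Fin 4 → ℝ) : bil x y = bil y x := by simp [bil]; ring

lemma bil_smul_left (a : ℝ) (x y : Fin 4 → ℝ) : bil (a • x) y = a * bil x y := by
  simp [bil, Pi.smul_apply, smul_eq_mul]; ring

lemma bil_add_left (x y z : Fin 4 → ℝ) : bil (x + y) z = bil x z + bil y z := by
  simp [bil, Pi.add_apply]; ring

lemma bil_sub_left (x y z : Fin 4 → ℝ) : bil (x - y) z = bil x z - bil y z := by
  simp [bil, Pi.sub_apply]; ring

lemma bil_sum_left (f : Fin 4 → (Fin 4 → ℝ)) (y : Fin 4 → ℝ) :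
    bil (∑ j, f j) y = ∑ j, bil (f j) y := by
  rw [Fin.sum_univ_four, Fin.sum_univ_four, bil_add_left, bil_add_left, bil_add_left]

/-- the map `y ↦ bil x y` as a linear map -/
def bilR (x : Fin 4 → ℝ) : (Fin 4 → ℝ) →ₗ[ℝ] ℝ where
  toFun y := bil x y
  map_add' a b := by simp [bil, Pi.add_apply]; ring
  map_smul' c a := by simp [bil, Pi.smul_apply, smul_eq_mul]; ring

lemma det3_neg (a b c : ℝ) (ha : a < -1) (hb : b < -1) (hc : c < -1) :
    1 + 2 * (a * b * c) - a ^ 2 - b ^ 2 - c ^ 2 < 0 := by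
  have hab : 1 < a * b := by nlinarith
  have habc : a * b * c < -1 := by nlinarith
  nlinarith

/-- Existence, explicit formula and uniqueness of the outward unit normal vectors of a truncated
hyperideal anti-de Sitter tetrahedron, together with the cofactor formula for ⟨uᵢ,uⱼ⟩. -/
theorem stmt3 (v : Fin 4 → (Fin 4 → ℝ)) (hv : IsAdSTetra v)
    (G : Matrix (Fin 4) (Fin 4) ℝ) (hG : ∀ i j, G i j = bil (v i) (v j))
    (C : Fin 4 → Fin 4 → ℝ) (hC : ∀ i j, C i j = G.adjugate j i) :
    0 < G.det ∧ (∀ i, C i i < 0) ∧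
    ∀ u : Fin 4 → (Fin 4 → ℝ),
      (∀ i, u i = (Real.sqrt (-(C i i) * G.det))⁻¹ • ∑ j, C i j • v j) →
      (∀ i, bil (u i) (v i) = Real.sqrt (G.det / (-(C i i)))) ∧
      (∀ i, 0 < bil (u i) (v i)) ∧
      (∀ i, bil (u i) (u i) = -1) ∧
      (∀ i j, j ≠ i → bil (u i) (v j) = 0) ∧
      (∀ i, ∀ w : Fin 4 → ℝ, 0 < bil w (v i) → |bil w w| = 1 →
        (∀ j, j ≠ i → bil w (v j) = 0) → w = u i) ∧
      (∀ i j, bil (u i) (u j) = C i j / Real.sqrt (C i i * C j j)) := by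
  obtain ⟨hind, hunit, hseg⟩ := hv
  have hsym : ∀ i j, G i j = G j i := fun i j => by rw [hG, hG, bil_comm]
  have hdiag : ∀ i, G i i = 1 := fun i => by rw [hG]; exact hunit i
  -- off-diagonal entries are < -1
  have hoff : ∀ i j, i ≠ j → G i j < -1 := by
    intro i j hij
    obtain ⟨t, ⟨ht0, ht1⟩, hneg⟩ := hseg i j hij
    have hexp : bil (t • v i + (1 - t) • v j) (t • v i + (1 - t) • v j)
        = t ^ 2 * bil (v i) (v i) + 2 * t * (1 - t) * bil (v i) (v j)
          + (1 - t) ^ 2 * bil (v j) (v j) := by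
      simp [bil, Pi.add_apply, Pi.smul_apply, smul_eq_mul]; ring
    rw [hexp, hunit i, hunit j] at hneg
    rw [hG]
    nlinarith [sq_nonneg (2 * t - 1), mul_nonneg ht0 (by linarith : (0:ℝ) ≤ 1 - t)]
  -- determinant is positive
  have hdet : 0 < G.det := by
    set M : Matrix (Fin 4) (Fin 4) ℝ := Matrix.of fun i j => v i j with hM
    set J : Matrix (Fin 4) (Fin 4) ℝ := Matrix.diagonal ![1, 1, -1, -1] with hJ
    have hfact : G = M * J * M.transpose := by
      ext i k
      simp [Matrix.mul_apply, Matrix.diagonal_apply, hJ, hM, Fin.sum_univ_four, hG, bil,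
        Matrix.transpose_apply]
      ring
    have hMdet : M.det ≠ 0 := by
      have : IsUnit M := Matrix.linearIndependent_rows_iff_isUnit.mp (by exact hind)
      exact ((Matrix.isUnit_iff_isUnit_det M).mp this).ne_zero
    have hJdet : J.det = 1 := by
      simp [hJ, Matrix.det_diagonal, Fin.prod_univ_four]
    rw [hfact, Matrix.det_mul, Matrix.det_mul, hJdet, Matrix.det_transpose]
    nlinarith [mul_self_pos.mpr hMdet]
  -- diagonal cofactors are negative
  have hCneg : ∀ i, C i i < 0 := by
    intro i
    rw [hC, Matrix.adjugate_fin_succ_eq_det_submatrix]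
    set f := i.succAbove with hf
    have hfne : ∀ a b : Fin 3, a ≠ b → f a ≠ f b := fun a b hab h =>
      hab (Fin.succAbove_right_injective h)
    have ha := hoff (f 0) (f 1) (hfne 0 1 (by decide))
    have hb := hoff (f 0) (f 2) (hfne 0 2 (by decide))
    have hcc := hoff (f 1) (f 2) (hfne 1 2 (by decide))
    rw [Matrix.det_fin_three]
    simp only [Matrix.submatrix_apply]
    rw [hdiag, hdiag, hdiag, hsym (f 1) (f 0), hsym (f 2) (f 0), hsym (f 2) (f 1)]
    have hd3 := det3_neg _ _ _ ha hb hcc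
    have hpow : (-1 : ℝ) ^ ((i : ℕ) + (i : ℕ)) = 1 := Even.neg_one_pow ⟨i, rfl⟩
    rw [hpow]
    nlinarith [hd3]
  refine ⟨hdet, hCneg, ?_⟩
  intro u hu
  have hprod : ∀ i, 0 < -(C i i) * G.det := fun i => mul_pos (by linarith [hCneg i]) hdet
  set c : Fin 4 → ℝ := fun i => Real.sqrt (-(C i i) * G.det) with hc'
  have hcpos : ∀ i, 0 < c i := fun i => Real.sqrt_pos.mpr (hprod i)
  have hcsq : ∀ i, c i ^ 2 = -(C i i) * G.det := fun i => Real.sq_sqrt (hprod i).le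
  -- key Cramer identity
  have key : ∀ i k, bil (∑ j, C i j • v j) (v k) = if k = i then G.det else 0 := by
    intro i k
    rw [bil_sum_left]
    have h1 : ∀ j, bil (C i j • v j) (v k) = G k j * G.adjugate j i := by
      intro j; rw [bil_smul_left, hC, ← hG, hsym j k]; ring
    simp_rw [h1]
    have h2 : ∑ j, G k j * G.adjugate j i = (G * G.adjugate) k i := by
      rw [Matrix.mul_apply]
    rw [h2, Matrix.mul_adjugate]
    simp [Matrix.one_apply]
  have hbilv : ∀ i k, bil (u i) (v k) = (c i)⁻¹ * (if k = i then G.det else 0) := by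
    intro i k; rw [hu i, bil_smul_left, key]
  have horth : ∀ i j, j ≠ i → bil (u i) (v j) = 0 := by
    intro i j hji; rw [hbilv]; simp [hji]
  have hbii : ∀ i, bil (u i) (v i) = G.det / c i := by
    intro i; rw [hbilv, if_pos rfl, inv_mul_eq_div]
  have hbiipos : ∀ i, 0 < bil (u i) (v i) := by
    intro i; rw [hbii]; exact div_pos hdet (hcpos i)
  have hsqrt : ∀ i, Real.sqrt (G.det / (-(C i i))) = G.det / c i := by
    intro i
    have h1 : G.det / (-(C i i)) = G.det ^ 2 / (-(C i i) * G.det) := by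
      rw [pow_two, mul_comm (-(C i i)) G.det, mul_div_mul_left _ _ hdet.ne']
    rw [h1, Real.sqrt_div (sq_nonneg _), Real.sqrt_sq hdet.le]
  -- inner products of the normals
  have hbiluu : ∀ i j, bil (u i) (u j) = (c i)⁻¹ * ((c j)⁻¹ * (C i j * G.det)) := by
    intro i j
    rw [hu i, bil_smul_left, bil_sum_left]
    have h1 : ∀ k, bil (C i k • v k) (u j) = C i k * ((c j)⁻¹ * if k = j then G.det else 0) := by
      intro k; rw [bil_smul_left, bil_comm, hbilv]
    have hsum : ∑ k, bil (C i k • v k) (u j) = C i j * ((c j)⁻¹ * G.det) := by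
      rw [Finset.sum_eq_single j (fun b _ hb => by rw [h1 b, if_neg hb]; ring)
        (fun h => absurd (Finset.mem_univ j) h)]
      rw [h1 j, if_pos rfl]
    rw [hsum]; ring
  have huu : ∀ i, bil (u i) (u i) = -1 := by
    intro i
    rw [hbiluu i i]
    have h2 : C i i * G.det = -(c i * c i) := by nlinarith [hcsq i]
    rw [h2]
    field_simp
    rw [div_self (hcpos i).ne']
  -- span is everything
  have hspan : Submodule.span ℝ (Set.range v) = ⊤ :=
    hind.span_eq_top_of_card_eq_finrank (by simp)
  have hzero : ∀ z : Fin 4 → ℝ, (∀ k, bil z (v k) = 0) → z = 0 := by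
    intro z hz
    have hall : ∀ y, bil z y = 0 := by
      intro y
      have hle : Submodule.span ℝ (Set.range v) ≤ LinearMap.ker (bilR z) := by
        rw [Submodule.span_le]; rintro _ ⟨k, rfl⟩; exact hz k
      exact hle (hspan ▸ Submodule.mem_top)
    funext k
    fin_cases k
    · have h := hall (Pi.single 0 1); simp [bil, Pi.single_apply] at h; simpa using h
    · have h := hall (Pi.single 1 1); simp [bil, Pi.single_apply] at h; simpa using h
    · have h := hall (Pi.single 2 1); simp [bil, Pi.single_apply] at h; simpa using h
    · have h := hall (Pi.single 3 1); simp [bil, Pi.single_apply] at h; simpa using h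
  refine ⟨fun i => by rw [hbii, hsqrt], hbiipos, huu, horth, ?_, ?_⟩
  · -- uniqueness
    intro i w hw1 hw2 hw3
    set s := bil w (v i) with hs
    set t := s * c i / G.det with ht
    have htpos : 0 < t := by
      apply div_pos (mul_pos hw1 (hcpos i)) hdet
    have hwz : w - t • u i = 0 := by
      apply hzero
      intro k
      rw [bil_sub_left, bil_smul_left, hbilv i k]
      by_cases hk : k = i
      · subst hk
        rw [if_pos rfl, ht]
        field_simp
        rw [mul_div_assoc, div_self (hcpos _).ne', mul_one, hs, sub_self]
      · rw [if_neg hk, hw3 k hk]; ring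
    have hw' : w = t • u i := by rwa [sub_eq_zero] at hwz
    have hww : bil w w = -(t ^ 2) := by
      rw [hw', bil_smul_left, bil_comm, bil_smul_left, bil_comm, huu i]; ring
    rw [hww, abs_neg, abs_of_nonneg (sq_nonneg t)] at hw2
    have ht1 : t = 1 := by nlinarith
    rw [hw', ht1, one_smul]
  · -- cofactor formula for bil (u i) (u j)
    intro i j
    have hs : 0 < Real.sqrt (C i i * C j j) :=
      Real.sqrt_pos.mpr (mul_pos_of_neg_of_neg (hCneg i) (hCneg j))
    have e1 : c i * c j = Real.sqrt (C i i * C j j) * G.det := by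
      rw [hc']
      rw [← Real.sqrt_mul (hprod i).le]
      rw [show (-(C i i) * G.det) * (-(C j j) * G.det) = (C i i * C j j) * G.det ^ 2 by ring]
      rw [Real.sqrt_mul (mul_pos_of_neg_of_neg (hCneg i) (hCneg j)).le, Real.sqrt_sq hdet.le]
    rw [hbiluu i j, show (c i)⁻¹ * ((c j)⁻¹ * (C i j * G.det)) = C i j * G.det / (c i * c j) by
      rw [div_eq_mul_inv, mul_inv]; ring]
    rw [e1, mul_comm (Real.sqrt (C i i * C j j)) G.det, mul_comm (C i j) G.det,
      mul_div_mul_left _ _ hdet.ne']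
end
end

section
/- Let v₁,...,v₄ be the vertices of a truncated hyperideal anti-de Sitter tetrahedron with outward unit normal vectors u₁,...,u₄, and let H be the 4×4 matrix with entries H_{ij} = ⟨uᵢ,uⱼ⟩ (so H_{ii} = −1), with cofactors denoted C_{ij}. Then: u₁,...,u₄ are linearly independent; H has signature (2,2) (in particular det H > 0); C_{ii} > 0 for every i and C_{ij} < 0 for every i ≠ j; and the vertices are recovered from the normals by vᵢ = (Σ_{j=1}^{4} C_{ij} uⱼ)/√(C_{ii}·det H). Consequently ⟨vᵢ,vⱼ⟩ = C_{ij}/√(C_{ii}·C_{jj}) for all i,j, and in particular ⟨vᵢ,vⱼ⟩ < −1 for i ≠ j. -/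
noncomputable section
open Matrix

def Jm : Matrix (Fin 4) (Fin 4) ℝ := Matrix.diagonal ![1, 1, -1, -1]

lemma bil_matrix (A B : Matrix (Fin 4) (Fin 4) ℝ) (i j : Fin 4) :
    (A * Jm * Bᵀ) i j = bil (A i) (B j) := by
  have h : ∀ k : Fin 4, (A * Jm) i k = A i k * ![(1:ℝ),1,-1,-1] k := by
    intro k; simp [Jm, Matrix.mul_diagonal]
  rw [Matrix.mul_apply]
  simp [h, Fin.sum_univ_four, bil]
  ring

lemma detJm : Jm.det = 1 := by
  simp [Jm, Matrix.det_diagonal, Fin.prod_univ_four]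

lemma bil_combo (a b : ℝ) (x y : Fin 4 → ℝ) :
    bil (a • x + b • y) (a • x + b • y)
      = a^2 * bil x x + 2*(a*b)*bil x y + b^2 * bil y y := by
  simp [bil, Pi.add_apply, Pi.smul_apply, smul_eq_mul]
  ring

/-- Properties of the Gram matrix in the outward unit normals of a truncated hyperideal
anti-de Sitter tetrahedron: signature (2,2), cofactor signs, recovery of the vertices, and the
cofactor formula for ⟨vᵢ,vⱼ⟩. -/
theorem stmt6 (v u : Fin 4 → (Fin 4 → ℝ)) (hv : IsAdSTetra v) (hu : IsOutwardNormal v u)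
    (H : Matrix (Fin 4) (Fin 4) ℝ) (hH : ∀ i j, H i j = bil (u i) (u j))
    (C : Fin 4 → Fin 4 → ℝ) (hC : ∀ i j, C i j = H.adjugate j i) :
    LinearIndependent ℝ u ∧
    sig22 H ∧
    0 < H.det ∧
    (∀ i, 0 < C i i) ∧
    (∀ i j, i ≠ j → C i j < 0) ∧
    (∀ i, v i = (Real.sqrt (C i i * H.det))⁻¹ • ∑ j, C i j • u j) ∧
    (∀ i j, bil (v i) (v j) = C i j / Real.sqrt (C i i * C j j)) ∧
    (∀ i j, i ≠ j → bil (v i) (v j) < -1) := by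
  obtain ⟨hvli, hvunit, hseg⟩ := hv
  set U : Matrix (Fin 4) (Fin 4) ℝ := Matrix.of u with hUdef
  set V : Matrix (Fin 4) (Fin 4) ℝ := Matrix.of v with hVdef
  set d : Fin 4 → ℝ := fun i => bil (u i) (v i) with hddef
  have hd : ∀ i, 0 < d i := fun i => (hu i).1
  have hUJV : U * Jm * Vᵀ = Matrix.diagonal d := by
    ext i j
    rw [bil_matrix]
    show bil (u i) (v j) = Matrix.diagonal d i j
    by_cases h : i = j
    · subst h; rw [Matrix.diagonal_apply_eq]
    · rw [Matrix.diagonal_apply_ne _ h]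
      exact (hu i).2.2 j (Ne.symm h)
  have hHmat : H = U * Jm * Uᵀ := by
    ext i j; rw [bil_matrix, hH]; rfl
  have hDpos : 0 < (Matrix.diagonal d).det := by
    rw [Matrix.det_diagonal]; exact Finset.prod_pos fun i _ => hd i
  have hdetUV : U.det * V.det = (Matrix.diagonal d).det := by
    have h := congrArg Matrix.det hUJV
    rwa [Matrix.det_mul, Matrix.det_mul, detJm, mul_one, Matrix.det_transpose] at h
  have hUdet : U.det ≠ 0 := by
    intro h; rw [h, zero_mul] at hdetUV; exact hDpos.ne hdetUV
  have hUdet' : IsUnit U.det := isUnit_iff_ne_zero.2 hUdet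
  have hdetH : H.det = U.det ^ 2 := by
    rw [hHmat, Matrix.det_mul, Matrix.det_mul, detJm, mul_one, Matrix.det_transpose]; ring
  have hdetHpos : 0 < H.det := by
    rw [hdetH]; positivity
  have hdetHne : H.det ≠ 0 := hdetHpos.ne'
  have hHsym : Hᵀ = H := by
    ext i j; rw [Matrix.transpose_apply, hH, hH]; unfold bil; ring
  have hCadj : ∀ i j, C i j = H.adjugate i j := by
    intro i j
    rw [hC]
    conv_lhs => rw [← hHsym, ← Matrix.adjugate_transpose, Matrix.transpose_apply]
  set W : Matrix (Fin 4) (Fin 4) ℝ := Jm * Uᵀ with hWdef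
  have hWdet : W.det ≠ 0 := by
    rw [hWdef, Matrix.det_mul, detJm, one_mul, Matrix.det_transpose]; exact hUdet
  have hWdet' : IsUnit W.det := isUnit_iff_ne_zero.2 hWdet
  have hHW : H = U * W := by rw [hHmat, hWdef, Matrix.mul_assoc]
  have hJt : Jmᵀ = Jm := by unfold Jm; exact Matrix.diagonal_transpose _
  have hVW : V * W = Matrix.diagonal d := by
    have h := congrArg Matrix.transpose hUJV
    rw [Matrix.transpose_mul, Matrix.transpose_mul, Matrix.transpose_transpose,
      Matrix.diagonal_transpose, hJt] at h
    rw [hWdef]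
    exact h
  have hHinvU : H⁻¹ * U = W⁻¹ := by
    rw [hHW, Matrix.mul_inv_rev, Matrix.mul_assoc, Matrix.nonsing_inv_mul U hUdet',
      Matrix.mul_one]
  have hV : V = Matrix.diagonal d * H⁻¹ * U := by
    rw [Matrix.mul_assoc, hHinvU, ← hVW, Matrix.mul_assoc,
      Matrix.mul_nonsing_inv W hWdet', Matrix.mul_one]
  have hJVt : Jm * Vᵀ = U⁻¹ * Matrix.diagonal d := by
    rw [← hUJV, Matrix.mul_assoc U Jm Vᵀ, ← Matrix.mul_assoc U⁻¹ U (Jm * Vᵀ),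
      Matrix.nonsing_inv_mul U hUdet', Matrix.one_mul]
  have hG : V * Jm * Vᵀ = Matrix.diagonal d * H⁻¹ * Matrix.diagonal d := by
    rw [Matrix.mul_assoc, hJVt, hV, Matrix.mul_assoc (Matrix.diagonal d * H⁻¹) U,
      ← Matrix.mul_assoc U, Matrix.mul_nonsing_inv U hUdet', Matrix.one_mul]
  have hHinvE : ∀ i j, H⁻¹ i j = (H.det)⁻¹ * C i j := by
    intro i j
    rw [Matrix.inv_def, Matrix.smul_apply, Ring.inverse_eq_inv', smul_eq_mul, hCadj]
  have hGent : ∀ i j, bil (v i) (v j) * H.det = d i * d j * C i j := by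
    intro i j
    have h1 : bil (v i) (v j) = (Matrix.diagonal d * H⁻¹ * Matrix.diagonal d) i j := by
      rw [← hG, bil_matrix]; rfl
    rw [h1, Matrix.mul_diagonal, Matrix.diagonal_mul, hHinvE]
    field_simp
  have hdiag : ∀ i, d i ^ 2 * C i i = H.det := by
    intro i
    have h := hGent i i
    rw [hvunit i, one_mul] at h
    rw [h]; ring
  have hCpos : ∀ i, 0 < C i i := by
    intro i
    have h := hdiag i
    nlinarith [hd i, hdetHpos, sq_nonneg (d i)]
  have hlt : ∀ i j, i ≠ j → bil (v i) (v j) < -1 := by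
    intro i j hij
    obtain ⟨t, ht, hneg⟩ := hseg i j hij
    rw [bil_combo, hvunit i, hvunit j] at hneg
    by_contra hge
    push_neg at hge
    have h1 : 0 ≤ t := ht.1
    have h2 : t ≤ 1 := ht.2
    nlinarith [sq_nonneg (2 * t - 1), mul_nonneg (mul_nonneg h1 (by linarith : (0:ℝ) ≤ 1 - t))
      (by linarith : (0:ℝ) ≤ bil (v i) (v j) + 1)]
  have hCneg : ∀ i j, i ≠ j → C i j < 0 := by
    intro i j hij
    have h := hGent i j
    have hb := hlt i j hij
    nlinarith [mul_pos (hd i) (hd j), hdetHpos]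
  have hsq2 : ∀ i j, Real.sqrt (C i i * C j j) = H.det / (d i * d j) := by
    intro i j
    have hi := hdiag i
    have hj := hdiag j
    have h : C i i * C j j = (H.det / (d i * d j)) ^ 2 := by
      rw [div_pow, eq_div_iff (pow_ne_zero 2 (mul_pos (hd i) (hd j)).ne')]
      linear_combination (C j j * d j ^ 2) * hi + H.det * hj
    rw [h, Real.sqrt_sq (div_pos hdetHpos (mul_pos (hd i) (hd j))).le]
  have hsq1 : ∀ i, Real.sqrt (C i i * H.det) = H.det / d i := by
    intro i
    have hi := hdiag i
    have h : C i i * H.det = (H.det / d i) ^ 2 := by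
      rw [div_pow, eq_div_iff (pow_ne_zero 2 (hd i).ne')]
      linear_combination H.det * hi
    rw [h, Real.sqrt_sq (div_pos hdetHpos (hd i)).le]
  have hbilform : ∀ i j, bil (v i) (v j) = C i j / Real.sqrt (C i i * C j j) := by
    intro i j
    rw [hsq2 i j]
    have h := hGent i j
    have hdi := (hd i).ne'
    have hdj := (hd j).ne'
    rw [eq_div_iff (div_pos hdetHpos (mul_pos (hd i) (hd j))).ne']
    field_simp
    linear_combination h
  have hrecov : ∀ i, v i = (Real.sqrt (C i i * H.det))⁻¹ • ∑ j, C i j • u j := by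
    intro i
    rw [hsq1 i]
    funext k
    have hVik : v i k = (Matrix.diagonal d * (H⁻¹ * U)) i k := by
      rw [← Matrix.mul_assoc, ← hV]; rfl
    rw [Matrix.diagonal_mul, Matrix.mul_apply] at hVik
    simp only [Pi.smul_apply, Finset.sum_apply, smul_eq_mul]
    rw [hVik, Finset.mul_sum, Finset.mul_sum]
    apply Finset.sum_congr rfl
    intro j _
    rw [hHinvE i j]
    have hUu : U j k = u j k := rfl
    rw [hUu]
    have hdi := (hd i).ne'
    field_simp
    try ring
  have hUunit : IsUnit U := (Matrix.isUnit_iff_isUnit_det U).2 hUdet'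
  have huli : LinearIndependent ℝ u :=
    Matrix.linearIndependent_rows_iff_isUnit.2 hUunit
  exact ⟨huli, ⟨Uᵀ, by rwa [Matrix.det_transpose], by
    rw [Matrix.transpose_transpose]; exact hHmat⟩, hdetHpos, hCpos, hCneg, hrecov, hbilform,
    fun i j hij => hlt i j hij⟩
end
end

section
/- Let (l₁,...,l₆) be a six-tuple of positive real numbers and let G = Gram(l₁,...,l₆) be its Gram matrix in the edge lengths. If det G > 0, then G has signature (2,2), i.e. G = Mᵀ · diag(1,1,−1,−1) · M for some invertible real 4×4 matrix M. -/
noncomputable section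

open Matrix

/-- The quadratic form of a conjugated diagonal matrix, as a weighted sum of squares. -/
lemma aux_quad_form_eq {n : Type*} [Fintype n] [DecidableEq n] (U : Matrix n n ℝ) (μ : n → ℝ)
    (x : n → ℝ) :
    dotProduct x ((U * Matrix.diagonal μ * star U) *ᵥ x)
      = ∑ k, μ k * ((star U *ᵥ x) k) ^ 2 := by
  rw [← Matrix.mulVec_mulVec, ← Matrix.mulVec_mulVec, Matrix.dotProduct_mulVec]
  have h1 : x ᵥ* U = star U *ᵥ x := by
    ext k
    simp [Matrix.vecMul, Matrix.mulVec, dotProduct, mul_comm]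
  rw [h1]
  simp [Matrix.mulVec_diagonal, dotProduct]
  congr 1; ext k; ring

/-- Conjugating a sign diagonal matrix by a scaling and a permuted unitary. -/
lemma aux_conj_perm_eq {n : Type*} [Fintype n] [DecidableEq n] (U : Matrix n n ℝ) (μ v : n → ℝ)
    (σ : Equiv.Perm n) (h : ∀ k, v k * (Real.sqrt |μ (σ k)|) ^ 2 = μ (σ k)) :
    (Matrix.diagonal (fun k => Real.sqrt |μ (σ k)|) * (star U).submatrix σ id).transpose *
        Matrix.diagonal v *
        (Matrix.diagonal (fun k => Real.sqrt |μ (σ k)|) * (star U).submatrix σ id)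
      = U * Matrix.diagonal μ * star U := by
  set s : n → ℝ := fun k => Real.sqrt |μ (σ k)| with hs_def
  set N : Matrix n n ℝ := (star U).submatrix σ id with hN_def
  have hNT : N.transpose = U.submatrix id σ := by
    ext i j
    simp [hN_def, Matrix.conjTranspose_apply]
  have hs : Matrix.diagonal s * Matrix.diagonal v * Matrix.diagonal s
      = Matrix.diagonal (μ ∘ σ) := by
    rw [Matrix.diagonal_mul_diagonal, Matrix.diagonal_mul_diagonal]
    have hfun : (fun i => s i * v i * s i) = μ ∘ σ := by
      funext k
      show s k * v k * s k = μ (σ k)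
      linear_combination h k
    rw [hfun]
  have hdiag : Matrix.diagonal (μ ∘ σ) = (Matrix.diagonal μ).submatrix σ σ := by
    ext i j
    by_cases hij : i = j <;>
      simp [Matrix.diagonal_apply, Matrix.submatrix_apply, hij, σ.injective.eq_iff]
  calc (Matrix.diagonal s * N).transpose * Matrix.diagonal v * (Matrix.diagonal s * N)
      = N.transpose * (Matrix.diagonal s * Matrix.diagonal v * Matrix.diagonal s) * N := by
        rw [Matrix.transpose_mul, Matrix.diagonal_transpose]
        noncomm_ring
    _ = U.submatrix id σ * (Matrix.diagonal μ).submatrix σ σ * (star U).submatrix σ id := by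
        rw [hs, hdiag, hNT]
    _ = U * Matrix.diagonal μ * star U := by
        rw [Matrix.submatrix_mul_equiv U (Matrix.diagonal μ) id σ σ,
          Matrix.submatrix_mul_equiv (U * Matrix.diagonal μ) (star U) id σ id,
          Matrix.submatrix_id_id]

/-- A hermitian real 4×4 matrix with positive determinant whose eigenvalues, after a
permutation, have sign pattern (+,+,-,-), has signature (2,2). -/
lemma aux_key (G : Matrix (Fin 4) (Fin 4) ℝ) (hG : G.IsHermitian) (σ : Equiv.Perm (Fin 4))
    (h0 : 0 < hG.eigenvalues (σ 0)) (h1 : 0 < hG.eigenvalues (σ 1))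
    (h2 : hG.eigenvalues (σ 2) < 0) (h3 : hG.eigenvalues (σ 3) < 0)
    (hdet : 0 < G.det) : sig22 G := by
  set μ := hG.eigenvalues with hμ
  set U : Matrix (Fin 4) (Fin 4) ℝ := (hG.eigenvectorUnitary : Matrix (Fin 4) (Fin 4) ℝ)
    with hU
  have hspec : G = U * Matrix.diagonal μ * star U := by
    have := hG.spectral_theorem
    simpa [RCLike.ofReal_real_eq_id] using this
  have hsq : ∀ k, (![1, 1, -1, -1] : Fin 4 → ℝ) k * (Real.sqrt |μ (σ k)|) ^ 2 = μ (σ k) := by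
    intro k
    fin_cases k <;> simp [abs_of_pos, abs_of_neg, h0, h1, h2, h3]
    · exact Real.sq_sqrt h0.le
    · exact Real.sq_sqrt h1.le
    · rw [Real.sq_sqrt (by linarith : (0:ℝ) ≤ -μ (σ 2))]; ring
    · rw [Real.sq_sqrt (by linarith : (0:ℝ) ≤ -μ (σ 3))]; ring
  set M : Matrix (Fin 4) (Fin 4) ℝ :=
    Matrix.diagonal (fun k => Real.sqrt |μ (σ k)|) * (star U).submatrix σ id with hM
  have hGM : G = M.transpose * Matrix.diagonal ![1, 1, -1, -1] * M := by
    rw [hM, aux_conj_perm_eq U μ _ σ hsq, ← hspec]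
  refine ⟨M, ?_, hGM⟩
  intro hMdet
  have : G.det = 0 := by
    rw [hGM, Matrix.det_mul, Matrix.det_mul, hMdet, mul_zero]
  linarith

set_option maxHeartbeats 1000000 in
/-- If the Gram matrix in the edge lengths of a six-tuple of positive reals has positive
determinant, then it has signature (2,2). -/
theorem stmt7 (l₁ l₂ l₃ l₄ l₅ l₆ : ℝ)
    (h₁ : 0 < l₁) (h₂ : 0 < l₂) (h₃ : 0 < l₃) (h₄ : 0 < l₄) (h₅ : 0 < l₅) (h₆ : 0 < l₆)
    (hdet : 0 < (gramEdge l₁ l₂ l₃ l₄ l₅ l₆).det) :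
    sig22 (gramEdge l₁ l₂ l₃ l₄ l₅ l₆) := by
  set G := gramEdge l₁ l₂ l₃ l₄ l₅ l₆ with hGdef
  have hG : G.IsHermitian := by
    ext i j
    fin_cases i <;> fin_cases j <;> simp [hGdef, gramEdge, Matrix.conjTranspose_apply]
  set μ := hG.eigenvalues with hμ
  set U : Matrix (Fin 4) (Fin 4) ℝ := (hG.eigenvectorUnitary : Matrix (Fin 4) (Fin 4) ℝ)
    with hU
  have hspec : G = U * Matrix.diagonal μ * star U := by
    have := hG.spectral_theorem
    simpa [RCLike.ofReal_real_eq_id] using this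
  -- determinant is the product of the eigenvalues
  have hprod : 0 < μ 0 * μ 1 * μ 2 * μ 3 := by
    have h := hG.det_eq_prod_eigenvalues
    simp [Fin.prod_univ_four] at h
    linarith [h ▸ hdet]
  -- test vectors
  set y₁ : Fin 4 → ℝ := star U *ᵥ ![1,1,0,0] with hy₁
  set y₂ : Fin 4 → ℝ := star U *ᵥ ![1,0,0,0] with hy₂
  have hneg : μ 0 * y₁ 0 ^ 2 + μ 1 * y₁ 1 ^ 2 + μ 2 * y₁ 2 ^ 2 + μ 3 * y₁ 3 ^ 2 < 0 := by
    have hq := aux_quad_form_eq U μ ![1,1,0,0]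
    rw [← hspec] at hq
    have hc : dotProduct (![1,1,0,0] : Fin 4 → ℝ) (G *ᵥ ![1,1,0,0]) < 0 := by
      have := Real.one_lt_cosh.mpr h₁.ne'
      simp [hGdef, gramEdge, Matrix.mulVec, dotProduct, Fin.sum_univ_four]
      linarith
    rw [hq, Fin.sum_univ_four] at hc
    exact hc
  have hpos : 0 < μ 0 * y₂ 0 ^ 2 + μ 1 * y₂ 1 ^ 2 + μ 2 * y₂ 2 ^ 2 + μ 3 * y₂ 3 ^ 2 := by
    have hq := aux_quad_form_eq U μ ![1,0,0,0]
    rw [← hspec] at hq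
    have hc : 0 < dotProduct (![1,0,0,0] : Fin 4 → ℝ) (G *ᵥ ![1,0,0,0]) := by
      simp [hGdef, gramEdge, Matrix.mulVec, dotProduct, Fin.sum_univ_four]
    rw [hq, Fin.sum_univ_four] at hc
    exact hc
  -- each eigenvalue is nonzero
  have hne : ∀ i, μ i ≠ 0 := by
    have hp : (∏ i, μ i) ≠ 0 := by
      rw [Fin.prod_univ_four]; exact hprod.ne'
    intro i hi
    exact hp (Finset.prod_eq_zero (Finset.mem_univ i) hi)
  rcases (hne 0).lt_or_gt with e0 | e0 <;> rcases (hne 1).lt_or_gt with e1 | e1 <;>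
    rcases (hne 2).lt_or_gt with e2 | e2 <;> rcases (hne 3).lt_or_gt with e3 | e3
  -- (-,-,-,-) : impossible, G not negative semidefinite
  · nlinarith [mul_nonneg (neg_nonneg.2 e0.le) (sq_nonneg (y₂ 0)),
      mul_nonneg (neg_nonneg.2 e1.le) (sq_nonneg (y₂ 1)),
      mul_nonneg (neg_nonneg.2 e2.le) (sq_nonneg (y₂ 2)),
      mul_nonneg (neg_nonneg.2 e3.le) (sq_nonneg (y₂ 3))]
  -- (-,-,-,+) : odd number of negatives
  · nlinarith [mul_pos (mul_pos (mul_pos (neg_pos.2 e0) (neg_pos.2 e1)) (neg_pos.2 e2)) e3]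
  -- (-,-,+,-)
  · nlinarith [mul_pos (mul_pos (mul_pos (neg_pos.2 e0) (neg_pos.2 e1)) e2) (neg_pos.2 e3)]
  -- (-,-,+,+) : positives at 2,3
  · exact aux_key G hG ⟨![2,3,0,1], ![2,3,0,1], by decide, by decide⟩ e2 e3 e0 e1 hdet
  -- (-,+,-,-)
  · nlinarith [mul_pos (mul_pos (mul_pos (neg_pos.2 e0) e1) (neg_pos.2 e2)) (neg_pos.2 e3)]
  -- (-,+,-,+) : positives at 1,3
  · exact aux_key G hG ⟨![1,3,0,2], ![2,0,3,1], by decide, by decide⟩ e1 e3 e0 e2 hdet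
  -- (-,+,+,-) : positives at 1,2
  · exact aux_key G hG ⟨![1,2,0,3], ![2,0,1,3], by decide, by decide⟩ e1 e2 e0 e3 hdet
  -- (-,+,+,+)
  · nlinarith [mul_pos (mul_pos (mul_pos (neg_pos.2 e0) e1) e2) e3]
  -- (+,-,-,-)
  · nlinarith [mul_pos (mul_pos (mul_pos e0 (neg_pos.2 e1)) (neg_pos.2 e2)) (neg_pos.2 e3)]
  -- (+,-,-,+) : positives at 0,3
  · exact aux_key G hG ⟨![0,3,1,2], ![0,2,3,1], by decide, by decide⟩ e0 e3 e1 e2 hdet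
  -- (+,-,+,-) : positives at 0,2
  · exact aux_key G hG ⟨![0,2,1,3], ![0,2,1,3], by decide, by decide⟩ e0 e2 e1 e3 hdet
  -- (+,-,+,+)
  · nlinarith [mul_pos (mul_pos (mul_pos e0 (neg_pos.2 e1)) e2) e3]
  -- (+,+,-,-) : positives at 0,1
  · exact aux_key G hG (Equiv.refl _) e0 e1 e2 e3 hdet
  -- (+,+,-,+)
  · nlinarith [mul_pos (mul_pos (mul_pos e0 e1) (neg_pos.2 e2)) e3]
  -- (+,+,+,-)
  · nlinarith [mul_pos (mul_pos (mul_pos e0 e1) e2) (neg_pos.2 e3)]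
  -- (+,+,+,+) : impossible, G not positive semidefinite
  · nlinarith [mul_nonneg e0.le (sq_nonneg (y₁ 0)), mul_nonneg e1.le (sq_nonneg (y₁ 1)),
      mul_nonneg e2.le (sq_nonneg (y₁ 2)), mul_nonneg e3.le (sq_nonneg (y₁ 3))]
end
end

section
/- Let u₁, u₄ be real numbers with u₁ > 1 and u₄ > 1, let u₂, u₃, u₅, u₆ be real numbers in (−1,0), and suppose uᵢ·uⱼ < −1 for every i ∈ {1,4} and j ∈ {2,3,5,6}. Define A = u₁u₄ + u₂u₅ + u₃u₆ − u₁u₂u₆ − u₁u₃u₅ − u₂u₃u₄ − u₄u₅u₆ + u₁u₂u₃u₄u₅u₆, B = −(u₁ − 1/u₁)(u₄ − 1/u₄) − (u₂ − 1/u₂)(u₅ − 1/u₅) − (u₃ − 1/u₃)(u₆ − 1/u₆), and C = 1/(u₁u₄) + 1/(u₂u₅) + 1/(u₃u₆) − 1/(u₁u₂u₆) − 1/(u₁u₃u₅) − 1/(u₂u₃u₄) − 1/(u₄u₅u₆) + 1/(u₁u₂u₃u₄u₅u₆). Then A > 0, B < 0, and C > 0. -/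
private lemma t_pos (x : ℝ) (h : 1 < x) : 0 < x - 1/x := by
  have hx : (0:ℝ) < x := by linarith
  have : 1/x < x := by rw [div_lt_iff₀ hx]; nlinarith
  linarith

private lemma t_neg (x : ℝ) (h0 : -1 < x) (h1 : x < 0) : 0 < x - 1/x := by
  have : 1/x < x := by rw [div_lt_iff_of_neg h1]; nlinarith
  linarith

private lemma pos_of_mul (x p e : ℝ) (hp : 0 < p) (he : 0 < e) (hEq : x * p = e) : 0 < x := by
  nlinarith

private lemma sq_aux (x : ℝ) (hx : 0 < x) (h1 : x < 1) : 0 ≤ 1 - x^2 := by nlinarith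

private lemma key_aux (a b c d : ℝ) (ha0 : 0 < a) (hb0 : 0 < b) (hc0 : 0 < c) (hd0 : 0 < d)
    (ha1 : a < 1) (hb1 : b < 1) (hc1 : c < 1) (hd1 : d < 1) :
    0 ≤ a*c*(1-b^2)*(1-d^2) + b*d*(1-a^2)*(1-c^2) := by
  have e1 : 0 ≤ a*c*(1-b^2)*(1-d^2) :=
    mul_nonneg (mul_nonneg (mul_nonneg ha0.le hc0.le) (sq_aux b hb0 hb1)) (sq_aux d hd0 hd1)
  have e2 : 0 ≤ b*d*(1-a^2)*(1-c^2) :=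
    mul_nonneg (mul_nonneg (mul_nonneg hb0.le hd0.le) (sq_aux a ha0 ha1)) (sq_aux c hc0 hc1)
  linarith

private lemma lemA (u₁ u₄ a b c d : ℝ) (h₁ : 1 < u₁) (h₄ : 1 < u₄)
    (ha0 : 0 < a) (hb0 : 0 < b) (hc0 : 0 < c) (hd0 : 0 < d)
    (ha1 : a < 1) (hb1 : b < 1) (hc1 : c < 1) (hd1 : d < 1)
    (h1a : 1 < u₁ * a) (h4a : 1 < u₄ * a) :
    0 < u₁*u₄*(1 + a*b*c*d) - u₁*(a*d + b*c) - u₄*(a*b + c*d) + (a*c + b*d) := by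
  have hP : (0:ℝ) < 1 + a*b*c*d := by positivity
  have L1 : 0 < u₁ * (1 + a*b*c*d) - (a*b + c*d) := by
    have t1 : 0 ≤ b*c*d*(u₁*a - 1) :=
      mul_nonneg (by positivity) (by linarith)
    have t2 : 0 < (1-b)*(1-c*d) := by
      have : c*d < 1 := by nlinarith
      have : (0:ℝ) < 1 - b := by linarith
      nlinarith
    have t3 : 0 < b*(1-a) := mul_pos hb0 (by linarith)
    nlinarith [t1, t2, t3]
  have L2 : 0 < u₄ * (1 + a*b*c*d) - (a*d + b*c) := by
    have t1 : 0 ≤ b*c*d*(u₄*a - 1) :=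
      mul_nonneg (by positivity) (by linarith)
    have t2 : 0 < (1-d)*(1-b*c) := by
      have : b*c < 1 := by nlinarith
      have : (0:ℝ) < 1 - d := by linarith
      nlinarith
    have t3 : 0 < d*(1-a) := mul_pos hd0 (by linarith)
    nlinarith [t1, t2, t3]
  have key := key_aux a b c d ha0 hb0 hc0 hd0 ha1 hb1 hc1 hd1
  have hid : (u₁*u₄*(1 + a*b*c*d) - u₁*(a*d + b*c) - u₄*(a*b + c*d) + (a*c + b*d))
      * (1 + a*b*c*d)
      = (u₁ * (1 + a*b*c*d) - (a*b + c*d)) * (u₄ * (1 + a*b*c*d) - (a*d + b*c))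
        + (a*c*(1-b^2)*(1-d^2) + b*d*(1-a^2)*(1-c^2)) := by ring
  nlinarith [mul_pos L1 L2, key, hP, hid]

private lemma lemC (u₁ u₄ a b c d : ℝ) (h₁ : 1 < u₁) (h₄ : 1 < u₄)
    (ha0 : 0 < a) (hb0 : 0 < b) (hc0 : 0 < c) (hd0 : 0 < d)
    (ha1 : a < 1) (hb1 : b < 1) (hc1 : c < 1) (hd1 : d < 1)
    (h1a : 1 < u₁ * a) (h1b : 1 < u₁ * b) (h4b : 1 < u₄ * b) (h4c : 1 < u₄ * c) :
    0 < u₁*u₄*(a*c + b*d) - u₁*(a*b + c*d) - u₄*(a*d + b*c) + (1 + a*b*c*d) := by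
  have hP' : (0:ℝ) < a*c + b*d := by positivity
  have M1 : 0 < u₁ * (a*c + b*d) - (a*d + b*c) := by
    have t1 : 0 ≤ c*(u₁*a - 1) := mul_nonneg hc0.le (by linarith)
    have t2 : 0 ≤ d*(u₁*b - 1) := mul_nonneg hd0.le (by linarith)
    have t3 : 0 < c*(1-b) := mul_pos hc0 (by linarith)
    have t4 : 0 < d*(1-a) := mul_pos hd0 (by linarith)
    nlinarith [t1, t2, t3, t4]
  have M2 : 0 < u₄ * (a*c + b*d) - (a*b + c*d) := by
    have t1 : 0 ≤ a*(u₄*c - 1) := mul_nonneg ha0.le (by linarith)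
    have t2 : 0 ≤ d*(u₄*b - 1) := mul_nonneg hd0.le (by linarith)
    have t3 : 0 < a*(1-b) := mul_pos ha0 (by linarith)
    have t4 : 0 < d*(1-c) := mul_pos hd0 (by linarith)
    nlinarith [t1, t2, t3, t4]
  have key := key_aux a b c d ha0 hb0 hc0 hd0 ha1 hb1 hc1 hd1
  have hid : (u₁*u₄*(a*c + b*d) - u₁*(a*b + c*d) - u₄*(a*d + b*c) + (1 + a*b*c*d))
      * (a*c + b*d)
      = (u₁ * (a*c + b*d) - (a*d + b*c)) * (u₄ * (a*c + b*d) - (a*b + c*d))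
        + (a*c*(1-b^2)*(1-d^2) + b*d*(1-a^2)*(1-c^2)) := by ring
  nlinarith [mul_pos M1 M2, key, hP', hid]

/-- Sign of the coefficients A, B, C of the critical-point quadratic, under the hypotheses
u₁, u₄ > 1, u₂, u₃, u₅, u₆ ∈ (−1,0), and uᵢuⱼ < −1 for i ∈ {1,4}, j ∈ {2,3,5,6}. -/
theorem stmt9 (u₁ u₂ u₃ u₄ u₅ u₆ : ℝ)
    (h₁ : 1 < u₁) (h₄ : 1 < u₄)
    (h₂ : u₂ ∈ Set.Ioo (-1 : ℝ) 0) (h₃ : u₃ ∈ Set.Ioo (-1 : ℝ) 0)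
    (h₅ : u₅ ∈ Set.Ioo (-1 : ℝ) 0) (h₆ : u₆ ∈ Set.Ioo (-1 : ℝ) 0)
    (h₁₂ : u₁ * u₂ < -1) (h₁₃ : u₁ * u₃ < -1) (h₁₅ : u₁ * u₅ < -1) (h₁₆ : u₁ * u₆ < -1)
    (h₄₂ : u₄ * u₂ < -1) (h₄₃ : u₄ * u₃ < -1) (h₄₅ : u₄ * u₅ < -1) (h₄₆ : u₄ * u₆ < -1) :
    0 < u₁*u₄ + u₂*u₅ + u₃*u₆ - u₁*u₂*u₆ - u₁*u₃*u₅ - u₂*u₃*u₄ - u₄*u₅*u₆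
        + u₁*u₂*u₃*u₄*u₅*u₆ ∧
    -(u₁ - 1/u₁) * (u₄ - 1/u₄) - (u₂ - 1/u₂) * (u₅ - 1/u₅) - (u₃ - 1/u₃) * (u₆ - 1/u₆) < 0 ∧
    0 < 1/(u₁*u₄) + 1/(u₂*u₅) + 1/(u₃*u₆) - 1/(u₁*u₂*u₆) - 1/(u₁*u₃*u₅) - 1/(u₂*u₃*u₄)
        - 1/(u₄*u₅*u₆) + 1/(u₁*u₂*u₃*u₄*u₅*u₆) := by
  obtain ⟨h₂l, h₂r⟩ := h₂
  obtain ⟨h₃l, h₃r⟩ := h₃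
  obtain ⟨h₅l, h₅r⟩ := h₅
  obtain ⟨h₆l, h₆r⟩ := h₆
  have hu1 : (0:ℝ) < u₁ := by linarith
  have hu4 : (0:ℝ) < u₄ := by linarith
  have h1a : 1 < u₁ * -u₂ := by rw [mul_neg]; linarith
  have h1b : 1 < u₁ * -u₃ := by rw [mul_neg]; linarith
  have h1c : 1 < u₁ * -u₅ := by rw [mul_neg]; linarith
  have h1d : 1 < u₁ * -u₆ := by rw [mul_neg]; linarith
  have h4a : 1 < u₄ * -u₂ := by rw [mul_neg]; linarith
  have h4b : 1 < u₄ * -u₃ := by rw [mul_neg]; linarith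
  have h4c : 1 < u₄ * -u₅ := by rw [mul_neg]; linarith
  have h4d : 1 < u₄ * -u₆ := by rw [mul_neg]; linarith
  have hA' := lemA u₁ u₄ (-u₂) (-u₃) (-u₅) (-u₆) h₁ h₄
    (by linarith) (by linarith) (by linarith) (by linarith)
    (by linarith) (by linarith) (by linarith) (by linarith) h1a h4a
  refine ⟨by linarith [hA'], ?_, ?_⟩
  · -- B < 0
    have t1 := t_pos u₁ h₁
    have t4 := t_pos u₄ h₄
    have t2 := t_neg u₂ h₂l h₂r
    have t3 := t_neg u₃ h₃l h₃r
    have t5 := t_neg u₅ h₅l h₅r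
    have t6 := t_neg u₆ h₆l h₆r
    nlinarith [mul_pos t1 t4, mul_pos t2 t5, mul_pos t3 t6]
  · -- C > 0
    have hC' := lemC u₁ u₄ (-u₂) (-u₃) (-u₅) (-u₆) h₁ h₄
      (by linarith) (by linarith) (by linarith) (by linarith)
      (by linarith) (by linarith) (by linarith) (by linarith) h1a h1b h4b h4c
    have hne1 : u₁ ≠ 0 := ne_of_gt hu1
    have hne4 : u₄ ≠ 0 := ne_of_gt hu4
    have hne2 : u₂ ≠ 0 := ne_of_lt h₂r
    have hne3 : u₃ ≠ 0 := ne_of_lt h₃r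
    have hne5 : u₅ ≠ 0 := ne_of_lt h₅r
    have hne6 : u₆ ≠ 0 := ne_of_lt h₆r
    have hprod : (0:ℝ) < u₁*u₄*(-u₂*-u₃*-u₅*-u₆) := by
      apply mul_pos (mul_pos hu1 hu4)
      have : -u₂*-u₃*-u₅*-u₆ = (-u₂)*(-u₃)*(-u₅)*(-u₆) := by ring
      rw [this]
      exact mul_pos (mul_pos (mul_pos (by linarith) (by linarith)) (by linarith)) (by linarith)
    have hEq : (1/(u₁*u₄) + 1/(u₂*u₅) + 1/(u₃*u₆) - 1/(u₁*u₂*u₆) - 1/(u₁*u₃*u₅)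
          - 1/(u₂*u₃*u₄) - 1/(u₄*u₅*u₆) + 1/(u₁*u₂*u₃*u₄*u₅*u₆)) * (u₁*u₄*(-u₂*-u₃*-u₅*-u₆))
        = u₁*u₄*(-u₂*-u₅ + -u₃*-u₆) - u₁*(-u₂*-u₃ + -u₅*-u₆) - u₄*(-u₂*-u₆ + -u₃*-u₅)
          + (1 + -u₂*-u₃*-u₅*-u₆) := by
      field_simp
      ring
    exact pos_of_mul _ _ _ hprod hC' hEq
end

section
/- Let α, β ∈ (0,π) with α + β < π, and for l ∈ ℝ define φ(l) = −4·sin(2α)/(cosh²l − cos²α) − 4·sin(2β)/(cosh²l − cos²β) (the denominators are positive since cosh²l − cos²α ≥ 1 − cos²α > 0). Then: (1) if |α − β| ≤ π/2, then φ(l) < 0 for every l ∈ ℝ; (2) if |α − β| > π/2, then cos α · cos β / cos(α − β) > 1, and setting l₀ = arccosh(√(cos α · cos β / cos(α − β))) > 0, one has φ(l) < 0 for every l with |l| < l₀ and φ(l) > 0 for every l with |l| > l₀. -/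
noncomputable section

open Real

/-- The inverse hyperbolic cosine, arccosh(x) = log(x + √(x² − 1)). -/
def arcosh (x : ℝ) : ℝ := Real.log (x + Real.sqrt (x ^ 2 - 1))

/-- The second derivative φ(l) = ∂²/∂l² (Im L(α+il) + Im L(β−il)). -/
def phi (α β l : ℝ) : ℝ :=
  -4 * Real.sin (2 * α) / (Real.cosh l ^ 2 - Real.cos α ^ 2)
    - 4 * Real.sin (2 * β) / (Real.cosh l ^ 2 - Real.cos β ^ 2)

lemma cosh_arcosh' {x : ℝ} (hx : 1 ≤ x) : Real.cosh (_root_.arcosh x) = x := by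
  have h1 : (0:ℝ) ≤ x ^ 2 - 1 := by nlinarith
  have hs : Real.sqrt (x ^ 2 - 1) ^ 2 = x ^ 2 - 1 := Real.sq_sqrt h1
  have hs0 : 0 ≤ Real.sqrt (x ^ 2 - 1) := Real.sqrt_nonneg _
  have hy : 0 < x + Real.sqrt (x ^ 2 - 1) := by nlinarith
  rw [_root_.arcosh, Real.cosh_eq, Real.exp_log hy, Real.exp_neg, Real.exp_log hy]
  have hinv : (x + Real.sqrt (x ^ 2 - 1))⁻¹ = x - Real.sqrt (x ^ 2 - 1) := by
    exact inv_eq_of_mul_eq_one_right (by nlinarith)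
  rw [hinv]; ring

lemma phi_eq (α β l : ℝ) (hA : Real.cosh l ^ 2 - Real.cos α ^ 2 ≠ 0)
    (hB : Real.cosh l ^ 2 - Real.cos β ^ 2 ≠ 0) :
    phi α β l = 8 * Real.sin (α + β) *
      (Real.cos α * Real.cos β - Real.cos (α - β) * Real.cosh l ^ 2) /
      ((Real.cosh l ^ 2 - Real.cos α ^ 2) * (Real.cosh l ^ 2 - Real.cos β ^ 2)) := by
  have h1 := Real.sin_sq_add_cos_sq α
  have h2 := Real.sin_sq_add_cos_sq β
  rw [phi, Real.sin_two_mul, Real.sin_two_mul, Real.sin_add, Real.cos_sub]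
  field_simp
  linear_combination (8 * Real.sin α * Real.cos α * Real.cosh l ^ 2) * h2 +
    (8 * Real.sin β * Real.cos β * Real.cosh l ^ 2) * h1

/-- Sign analysis of φ: if |α−β| ≤ π/2 then φ < 0 everywhere; if |α−β| > π/2 then
cos α cos β / cos(α−β) > 1 and, with l₀ = arccosh √(cos α cos β / cos(α−β)) > 0, φ is negative
on |l| < l₀ and positive on |l| > l₀. -/
theorem stmt10 (α β : ℝ) (hα : α ∈ Set.Ioo 0 π) (hβ : β ∈ Set.Ioo 0 π) (hαβ : α + β < π) :
    (|α - β| ≤ π / 2 → ∀ l : ℝ, phi α β l < 0) ∧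
    (π / 2 < |α - β| →
      1 < Real.cos α * Real.cos β / Real.cos (α - β) ∧
      0 < _root_.arcosh (Real.sqrt (Real.cos α * Real.cos β / Real.cos (α - β))) ∧
      (∀ l : ℝ, |l| < _root_.arcosh (Real.sqrt (Real.cos α * Real.cos β / Real.cos (α - β))) →
        phi α β l < 0) ∧
      (∀ l : ℝ, _root_.arcosh (Real.sqrt (Real.cos α * Real.cos β / Real.cos (α - β))) < |l| →
        0 < phi α β l)) := by
  obtain ⟨hα0, hαπ⟩ := hα
  obtain ⟨hβ0, hβπ⟩ := hβ
  have hsa : 0 < Real.sin α := Real.sin_pos_of_pos_of_lt_pi hα0 hαπ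
  have hsb : 0 < Real.sin β := Real.sin_pos_of_pos_of_lt_pi hβ0 hβπ
  have hsab : 0 < Real.sin (α + β) :=
    Real.sin_pos_of_pos_of_lt_pi (by linarith) hαβ
  have hca2 : Real.cos α ^ 2 < 1 := by
    have := Real.sin_sq_add_cos_sq α; nlinarith
  have hcb2 : Real.cos β ^ 2 < 1 := by
    have := Real.sin_sq_add_cos_sq β; nlinarith
  have hccab : Real.cos α * Real.cos β - Real.cos (α - β) = - (Real.sin α * Real.sin β) := by
    rw [Real.cos_sub]; ring
  have hA : ∀ l : ℝ, 0 < Real.cosh l ^ 2 - Real.cos α ^ 2 := fun l => by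
    have h1 : (1:ℝ) ≤ Real.cosh l := Real.one_le_cosh l
    nlinarith
  have hB : ∀ l : ℝ, 0 < Real.cosh l ^ 2 - Real.cos β ^ 2 := fun l => by
    have h1 : (1:ℝ) ≤ Real.cosh l := Real.one_le_cosh l
    nlinarith
  have hphi : ∀ l : ℝ, phi α β l = 8 * Real.sin (α + β) *
      (Real.cos α * Real.cos β - Real.cos (α - β) * Real.cosh l ^ 2) /
      ((Real.cosh l ^ 2 - Real.cos α ^ 2) * (Real.cosh l ^ 2 - Real.cos β ^ 2)) :=
    fun l => phi_eq α β l (ne_of_gt (hA l)) (ne_of_gt (hB l))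
  constructor
  · intro hle l
    have hc : 0 ≤ Real.cos (α - β) := by
      rw [← Real.cos_abs]
      exact Real.cos_nonneg_of_mem_Icc
        ⟨by linarith [abs_nonneg (α - β), Real.pi_pos], hle⟩
    rw [hphi l]
    apply div_neg_of_neg_of_pos
    · have h1 : (1:ℝ) ≤ Real.cosh l := Real.one_le_cosh l
      have h2 : Real.cos (α - β) * 1 ≤ Real.cos (α - β) * Real.cosh l ^ 2 :=
        mul_le_mul_of_nonneg_left (by nlinarith) hc
      have hnum : Real.cos α * Real.cos β - Real.cos (α - β) * Real.cosh l ^ 2 < 0 := by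
        nlinarith [mul_pos hsa hsb]
      exact mul_neg_of_pos_of_neg (by positivity) hnum
    · exact mul_pos (hA l) (hB l)
  · intro hgt
    have habs : |α - β| < π := by
      rcases abs_cases (α - β) with ⟨h, _⟩ | ⟨h, _⟩ <;> rw [h] <;> linarith
    have hcneg : Real.cos (α - β) < 0 := by
      rw [← Real.cos_abs]
      apply Real.cos_neg_of_pi_div_two_lt_of_lt hgt
      linarith [Real.pi_pos]
    have hc1 : 1 < Real.cos α * Real.cos β / Real.cos (α - β) := by
      rw [lt_div_iff_of_neg hcneg]
      nlinarith [mul_pos hsa hsb]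
    set c := Real.cos α * Real.cos β / Real.cos (α - β) with hc
    have hceq : Real.cos (α - β) * c = Real.cos α * Real.cos β := by
      rw [hc]; field_simp [ne_of_lt hcneg]
    have hsc1 : 1 < Real.sqrt c := by
      rw [show (1:ℝ) = Real.sqrt 1 by simp]
      exact Real.sqrt_lt_sqrt (by norm_num) hc1
    have hcosh : Real.cosh (_root_.arcosh (Real.sqrt c)) = Real.sqrt c :=
      cosh_arcosh' hsc1.le
    have hl0pos : 0 < _root_.arcosh (Real.sqrt c) := by
      rw [_root_.arcosh]
      apply Real.log_pos
      nlinarith [Real.sqrt_nonneg (Real.sqrt c ^ 2 - 1)]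
    have hsq : Real.cosh (_root_.arcosh (Real.sqrt c)) ^ 2 = c := by
      rw [hcosh]; exact Real.sq_sqrt (by linarith)
    refine ⟨hc1, hl0pos, ?_, ?_⟩
    · intro l hl
      rw [hphi l]
      apply div_neg_of_neg_of_pos
      · have hlt : Real.cosh l < Real.cosh (_root_.arcosh (Real.sqrt c)) := by
          rw [Real.cosh_lt_cosh]; rwa [abs_of_pos hl0pos]
        have hc2 : Real.cosh l ^ 2 < c :=
          hsq ▸ pow_lt_pow_left₀ hlt (Real.cosh_pos _).le two_ne_zero
        have hnum : Real.cos α * Real.cos β - Real.cos (α - β) * Real.cosh l ^ 2 < 0 := by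
          have := mul_lt_mul_of_neg_left hc2 hcneg
          linarith [hceq]
        exact mul_neg_of_pos_of_neg (by positivity) hnum
      · exact mul_pos (hA l) (hB l)
    · intro l hl
      rw [hphi l]
      apply div_pos
      · have hlt : Real.cosh (_root_.arcosh (Real.sqrt c)) < Real.cosh l := by
          rw [Real.cosh_lt_cosh]; rwa [abs_of_pos hl0pos]
        have hc2 : c < Real.cosh l ^ 2 :=
          hsq ▸ pow_lt_pow_left₀ hlt (Real.cosh_pos _).le two_ne_zero
        have hnum : 0 < Real.cos α * Real.cos β - Real.cos (α - β) * Real.cosh l ^ 2 := by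
          have := mul_lt_mul_of_neg_left hc2 hcneg
          linarith [hceq]
        exact mul_pos (by positivity) hnum
      · exact mul_pos (hA l) (hB l)
end
end
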